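/- arXiv:1108.0492 — 10 statements merged into one kernel-verified Lean document; each statement's English description precedes it below -/
import Mathlib

section
/- Let Q be a convex quadrilateral with diagonals intersecting at a point o. Each diagonal splits the two interior angles at its endpoints into two parts, yielding 8 angles in total (the angles ∠o a b where a, b are adjacent vertices). At least 5 of these 8 angles are at most π/2. -/
open Real EuclideanGeometry Finset

/-! The two triangles `oab`, `obc` together have angle sum `2π`, and their angles at `o` are
supplementary because `o` lies strictly between `a` and `c`; so `∠oab + ∠oba + ∠obc + ∠ocb = π`,
and likewise on the side of `d`. The eight angles are therefore nonnegative with sum `2π`, so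
at most three of them can exceed `π / 2`. -/

theorem card_filter_lt_lt_of_sum_le {ι : Type*} {s : Finset ι} {f : ι → ℝ}
    (hf : ∀ i ∈ s, 0 ≤ f i) {t : ℝ} {m : ℕ} (hm : 0 < m) (hsum : ∑ i ∈ s, f i ≤ m * t) :
    #{i ∈ s | t < f i} < m := by
  by_contra! hle
  have ht : 0 ≤ t := by
    have : (0 : ℝ) ≤ m * t := (sum_nonneg hf).trans hsum
    exact nonneg_of_mul_nonneg_right this (by exact_mod_cast hm)
  have hne : {i ∈ s | t < f i}.Nonempty := card_pos.mp (hm.trans_le hle)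
  have : (m : ℝ) * t < ∑ i ∈ s, f i :=
    calc (m : ℝ) * t ≤ #{i ∈ s | t < f i} * t := by gcongr
      _ = ∑ _i ∈ {i ∈ s | t < f i}, t := by rw [sum_const, nsmul_eq_mul]
      _ < ∑ i ∈ {i ∈ s | t < f i}, f i :=
          sum_lt_sum_of_nonempty hne fun i hi => (mem_filter.mp hi).2
      _ ≤ ∑ i ∈ s, f i :=
          sum_le_sum_of_subset_of_nonneg (filter_subset _ _) fun i hi _ => hf i hi
  linarith

section

variable {V P : Type*} [NormedAddCommGroup V] [InnerProductSpace ℝ V] [MetricSpace P]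
  [NormedAddTorsor V P]

theorem Sbtw.angle₂₁₄_add_angle₂₄₁_add_angle₂₄₃_add_angle₂₃₄_eq_pi {p₁ p₂ p₃ : P}
    (h : Sbtw ℝ p₁ p₂ p₃) (p₄ : P) :
    ∠ p₂ p₁ p₄ + ∠ p₂ p₄ p₁ + ∠ p₂ p₄ p₃ + ∠ p₂ p₃ p₄ = π := by
  linarith [angle_add_angle_eq_pi_of_angle_eq_pi p₄ h.angle₁₂₃_eq_pi,
    angle_add_angle_add_angle_eq_pi p₄ h.ne_left, angle_add_angle_add_angle_eq_pi p₄ h.ne_right,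
    angle_comm p₂ p₁ p₄, angle_comm p₂ p₃ p₄, angle_comm p₁ p₂ p₄, angle_comm p₃ p₂ p₄]

end

theorem five_of_eight_angles_le_pi_div_two_general
    (a b c d o : EuclideanSpace ℝ (Fin 2))
    (hoac : o ∈ segment ℝ a c)
    (ho : o ≠ a ∧ o ≠ b ∧ o ≠ c ∧ o ≠ d) :
    5 ≤ (Finset.univ.filter (fun i : Fin 8 =>
      (![∠ o a b, ∠ o b a, ∠ o b c, ∠ o c b, ∠ o c d, ∠ o d c, ∠ o d a, ∠ o a d] i)
        ≤ π / 2)).card := by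
  obtain ⟨hoa, -, hoc, -⟩ := ho
  set f : Fin 8 → ℝ := ![∠ o a b, ∠ o b a, ∠ o b c, ∠ o c b, ∠ o c d, ∠ o d c, ∠ o d a, ∠ o a d]
  have haoc : Sbtw ℝ a o c := ⟨mem_segment_iff_wbtw.mp hoac, hoa, hoc⟩
  have hsum : ∑ i, f i ≤ (4 : ℕ) * (π / 2) := by
    simp only [Fin.sum_univ_eight, f, Matrix.cons_val]
    linarith [haoc.angle₂₁₄_add_angle₂₄₁_add_angle₂₄₃_add_angle₂₃₄_eq_pi b,
      haoc.symm.angle₂₁₄_add_angle₂₄₁_add_angle₂₄₃_add_angle₂₃₄_eq_pi d]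
  have hobtuse : #{i | π / 2 < f i} < 4 :=
    card_filter_lt_lt_of_sum_le (fun i _ => by fin_cases i <;> exact angle_nonneg _ _ _)
      (by norm_num) hsum
  have hsplit := card_filter_add_card_filter_not (s := univ) (fun i => f i ≤ π / 2)
  simp only [not_le, card_univ, Fintype.card_fin] at hsplit
  omega

open Classical in
/-- In a convex quadrilateral `a b c d` (in convex-position order) whose
diagonals `ac` and `bd` intersect at an interior point `o`, at least 5 of the 8 angles
∠oab, ∠oba, ∠obc, ∠ocb, ∠ocd, ∠odc, ∠oda, ∠oad are at most π/2. -/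
theorem five_of_eight_angles_le_pi_div_two
    (a b c d o : EuclideanSpace ℝ (Fin 2))
    (hconv : ∀ p ∈ ({a, b, c, d} : Set (EuclideanSpace ℝ (Fin 2))),
      p ∉ convexHull ℝ (({a, b, c, d} : Set (EuclideanSpace ℝ (Fin 2))) \ {p}))
    (hoac : o ∈ segment ℝ a c) (hobd : o ∈ segment ℝ b d)
    (ho : o ≠ a ∧ o ≠ b ∧ o ≠ c ∧ o ≠ d) :
    5 ≤ (Finset.univ.filter (fun i : Fin 8 =>
      (![∠ o a b, ∠ o b a, ∠ o b c, ∠ o c b, ∠ o c d, ∠ o d c, ∠ o d a, ∠ o a d] i)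
        ≤ π / 2)).card :=
  five_of_eight_angles_le_pi_div_two_general a b c d o hoac ho
end

section
/- For any set P of four points in the plane, one can assign to each point p ∈ P a closed quadrant (wedge of angle π/2) W_p with apex p such that: (i) the graph on P with edges {p,q} whenever q ∈ W_p and p ∈ W_q is connected, and (ii) the union of the four wedges is the entire plane. -/
open Real Complex

/-- The wedge (directional-antenna coverage region) with apex `p`, orientation `θ`
and angle `α`. -/
def Wedge (p : ℂ) (θ α : ℝ) : Set ℂ :=
  {x | ∃ r : ℝ, 0 ≤ r ∧ ∃ t ∈ Set.Icc 0 α,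
    x = p + (r : ℂ) * Complex.exp ((θ + t : ℝ) * Complex.I)}

/-!
Label the points `r 0, r 1, r 2, r 3` and use the frame in which `r 0 = 0` and `r 1 = 1`. If `r 2`
lies in the closed first quadrant, `r 3` in the closed upper half-plane and
`re (r 3) ≤ min 1 (re (r 2))`, then the quadrants facing NE, NW, SW and SE at `r 0, r 1, r 2, r 3`
cover the plane, and the pairs `r 0 r 1`, `r 0 r 2`, `r 1 r 3` see each other, so the communication
graph contains the spanning path `r 2 — r 0 — r 1 — r 3`.

Such a labelling exists: let `a b` be a diameter of the four points. In the frame `a = 0, b = 1`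
the other two points `X, Y` lie in the strip `0 ≤ re ≤ 1`. If they lie on the same side of the
real axis, the base `a b` (or `b a`) works; otherwise the quadrilateral `a X b Y` is convex and
one of its two sides through the point above the axis works as base.
-/

open ComplexConjugate Set

lemma mem_wedge_arg_iff {w : ℂ} (hw : w ≠ 0) (p x : ℂ) (α : ℝ) :
    x ∈ Wedge p (arg w) α ↔ (x - p) / w ∈ Wedge 0 0 α := by
  have hn : (‖w‖ : ℂ) ≠ 0 := by simpa using hw
  have hdir : exp (arg w * I) = w / ‖w‖ := by
    rw [eq_div_iff hn, mul_comm]; exact norm_mul_exp_arg_mul_I w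
  have hexp (t : ℝ) : exp (↑(arg w + t) * I) = w / ‖w‖ * exp (t * I) := by
    rw [← hdir, ← Complex.exp_add]; push_cast; ring_nf
  simp only [Wedge, mem_ofPred_eq, zero_add, hexp, div_eq_iff hw]
  constructor
  · rintro ⟨r, hr, t, ht, rfl⟩
    exact ⟨r / ‖w‖, by positivity, t, ht, by push_cast; ring⟩
  · rintro ⟨r, hr, t, ht, hx⟩
    refine ⟨‖w‖ * r, by positivity, t, ht, ?_⟩
    push_cast; field_simp; linear_combination hx

lemma mem_wedge_zero_zero_pi_div_two_iff (z : ℂ) :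
    z ∈ Wedge 0 0 (π / 2) ↔ 0 ≤ z.re ∧ 0 ≤ z.im := by
  constructor
  · rintro ⟨r, hr, t, ⟨ht₀, ht₁⟩, rfl⟩
    simp only [zero_add, re_ofReal_mul, im_ofReal_mul, exp_ofReal_mul_I_re, exp_ofReal_mul_I_im]
    exact ⟨mul_nonneg hr (cos_nonneg_of_mem_Icc ⟨by linarith [pi_pos], ht₁⟩),
      mul_nonneg hr (sin_nonneg_of_nonneg_of_le_pi ht₀ (by linarith [pi_pos]))⟩
  · rintro ⟨hre, him⟩
    refine ⟨‖z‖, norm_nonneg z, arg z, ⟨arg_nonneg_iff.2 him,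
      (abs_le.1 (abs_arg_le_pi_div_two_iff.2 hre)).2⟩, ?_⟩
    simp [norm_mul_exp_arg_mul_I]

def symmCommGraph {ι : Type*} (p : ι → ℂ) (θ : ι → ℝ) (α : ℝ) : SimpleGraph ι :=
  SimpleGraph.fromRel fun i j => p j ∈ Wedge (p i) (θ i) α ∧ p i ∈ Wedge (p j) (θ j) α

section symmCommGraph

variable {ι κ : Type*} {p : ι → ℂ} {θ : ι → ℝ} {α : ℝ}

lemma symmCommGraph_adj_of_mem {i j : ι} (hij : i ≠ j) (hj : p j ∈ Wedge (p i) (θ i) α)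
    (hi : p i ∈ Wedge (p j) (θ j) α) : (symmCommGraph p θ α).Adj i j :=
  (SimpleGraph.fromRel_adj _ _ _).2 ⟨hij, Or.inl ⟨hj, hi⟩⟩

def symmCommGraph.homOfInjective {f : κ → ι} (hf : Function.Injective f) :
    symmCommGraph (p ∘ f) (θ ∘ f) α →g symmCommGraph p θ α where
  toFun := f
  map_rel' h :=
    have h' := (SimpleGraph.fromRel_adj _ _ _).1 h
    (SimpleGraph.fromRel_adj _ _ _).2 ⟨hf.ne h'.1, h'.2⟩

lemma symmCommGraph.connected_of_comp_equiv (σ : κ ≃ ι)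
    (h : (symmCommGraph (p ∘ σ) (θ ∘ σ) α).Connected) : (symmCommGraph p θ α).Connected :=
  h.map (homOfInjective σ.injective) σ.surjective

end symmCommGraph

lemma SimpleGraph.connected_of_adj_fin_four {G : SimpleGraph (Fin 4)} (h01 : G.Adj 0 1)
    (h02 : G.Adj 0 2) (h13 : G.Adj 1 3) : G.Connected := by
  have hreach (v : Fin 4) : G.Reachable 0 v := by
    fin_cases v
    exacts [.refl _, h01.reachable, h02.reachable, h01.reachable.trans h13.reachable]
  exact ⟨fun u v => (hreach u).symm.trans (hreach v)⟩

lemma re_div_eq_mul_conj (z w : ℂ) : (z / w).re = (z * conj w).re / normSq w := by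
  simp [div_re, mul_re, add_div]

lemma im_div_eq_mul_conj (z w : ℂ) : (z / w).im = (z * conj w).im / normSq w := by
  simp [div_im, mul_im]; ring

noncomputable def frameCoord (r : Fin 4 → ℂ) (x : ℂ) : ℂ := (x - r 0) / (r 1 - r 0)

def GoodQuadruple (r : Fin 4 → ℂ) : Prop :=
  0 ≤ (frameCoord r (r 2)).re ∧ 0 ≤ (frameCoord r (r 2)).im ∧ 0 ≤ (frameCoord r (r 3)).im ∧
    (frameCoord r (r 3)).re ≤ 1 ∧ (frameCoord r (r 3)).re ≤ (frameCoord r (r 2)).re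

noncomputable def quadrantAngle (r : Fin 4 → ℂ) (k : Fin 4) : ℝ :=
  arg ((r 1 - r 0) * I ^ (k : ℕ))

section GoodQuadruple

variable {r : Fin 4 → ℂ}

@[simp] lemma frameCoord_zero : frameCoord r (r 0) = 0 := by simp [frameCoord]

lemma frameCoord_one (h01 : r 0 ≠ r 1) : frameCoord r (r 1) = 1 :=
  div_self (sub_ne_zero.2 h01.symm)

lemma sub_div_eq_frameCoord_sub (x y : ℂ) :
    (x - y) / (r 1 - r 0) = frameCoord r x - frameCoord r y := by
  simp only [frameCoord]; ring

lemma mem_wedge_quadrantAngle_iff (h01 : r 0 ≠ r 1) (k : Fin 4) (x : ℂ) :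
    x ∈ Wedge (r k) (quadrantAngle r k) (π / 2) ↔
      0 ≤ ((frameCoord r x - frameCoord r (r k)) * (-I) ^ (k : ℕ)).re ∧
        0 ≤ ((frameCoord r x - frameCoord r (r k)) * (-I) ^ (k : ℕ)).im := by
  have hw : (r 1 - r 0) * I ^ (k : ℕ) ≠ 0 :=
    mul_ne_zero (sub_ne_zero.2 h01.symm) (pow_ne_zero _ I_ne_zero)
  rw [quadrantAngle, mem_wedge_arg_iff hw, mem_wedge_zero_zero_pi_div_two_iff, ← div_div,
    sub_div_eq_frameCoord_sub, div_eq_mul_inv _ (I ^ _), ← inv_pow, inv_I]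

lemma mem_wedge_quadrantAngle_zero_iff (h01 : r 0 ≠ r 1) (x : ℂ) :
    x ∈ Wedge (r 0) (quadrantAngle r 0) (π / 2) ↔
      0 ≤ (frameCoord r x).re ∧ 0 ≤ (frameCoord r x).im := by
  simp [mem_wedge_quadrantAngle_iff h01]

lemma mem_wedge_quadrantAngle_one_iff (h01 : r 0 ≠ r 1) (x : ℂ) :
    x ∈ Wedge (r 1) (quadrantAngle r 1) (π / 2) ↔
      (frameCoord r x).re ≤ 1 ∧ 0 ≤ (frameCoord r x).im := by
  simp [mem_wedge_quadrantAngle_iff h01, frameCoord_one h01, and_comm]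

lemma mem_wedge_quadrantAngle_two_iff (h01 : r 0 ≠ r 1) (x : ℂ) :
    x ∈ Wedge (r 2) (quadrantAngle r 2) (π / 2) ↔
      (frameCoord r x).re ≤ (frameCoord r (r 2)).re ∧
        (frameCoord r x).im ≤ (frameCoord r (r 2)).im := by
  simp [mem_wedge_quadrantAngle_iff h01, I_sq]

lemma mem_wedge_quadrantAngle_three_iff (h01 : r 0 ≠ r 1) (x : ℂ) :
    x ∈ Wedge (r 3) (quadrantAngle r 3) (π / 2) ↔
      (frameCoord r (r 3)).re ≤ (frameCoord r x).re ∧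
        (frameCoord r x).im ≤ (frameCoord r (r 3)).im := by
  simp [mem_wedge_quadrantAngle_iff h01, pow_succ, and_comm]

theorem GoodQuadruple.connected (h : GoodQuadruple r) (h01 : r 0 ≠ r 1) :
    (symmCommGraph r (quadrantAngle r) (π / 2)).Connected := by
  obtain ⟨hu_re, hu_im, hv_im, hv_re, -⟩ := h
  refine SimpleGraph.connected_of_adj_fin_four
    (symmCommGraph_adj_of_mem (by decide) ?_ ?_) (symmCommGraph_adj_of_mem (by decide) ?_ ?_)
    (symmCommGraph_adj_of_mem (by decide) ?_ ?_)
  · simp [mem_wedge_quadrantAngle_zero_iff h01, frameCoord_one h01]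
  · simp [mem_wedge_quadrantAngle_one_iff h01]
  · exact (mem_wedge_quadrantAngle_zero_iff h01 _).2 ⟨hu_re, hu_im⟩
  · simpa [mem_wedge_quadrantAngle_two_iff h01] using ⟨hu_re, hu_im⟩
  · exact (mem_wedge_quadrantAngle_one_iff h01 _).2 ⟨hv_re, hv_im⟩
  · simpa [mem_wedge_quadrantAngle_three_iff h01, frameCoord_one h01] using ⟨hv_re, hv_im⟩

theorem GoodQuadruple.iUnion_wedge_eq_univ (h : GoodQuadruple r) (h01 : r 0 ≠ r 1) :
    ⋃ k, Wedge (r k) (quadrantAngle r k) (π / 2) = univ := by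
  obtain ⟨-, hu_im, hv_im, -, hvu⟩ := h
  refine eq_univ_of_forall fun x => mem_iUnion.2 ?_
  rcases le_total 0 (frameCoord r x).im with him | him
  · rcases le_total 0 (frameCoord r x).re with hre | hre
    · exact ⟨0, (mem_wedge_quadrantAngle_zero_iff h01 x).2 ⟨hre, him⟩⟩
    · exact ⟨1, (mem_wedge_quadrantAngle_one_iff h01 x).2 ⟨by linarith, him⟩⟩
  · rcases le_total (frameCoord r x).re (frameCoord r (r 2)).re with hre | hre
    · exact ⟨2, (mem_wedge_quadrantAngle_two_iff h01 x).2 ⟨hre, by linarith⟩⟩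
    · exact ⟨3, (mem_wedge_quadrantAngle_three_iff h01 x).2 ⟨by linarith, by linarith⟩⟩

lemma GoodQuadruple.of_mul_conj (a b c d : ℂ)
    (h₁ : 0 ≤ ((c - a) * conj (b - a)).re) (h₂ : 0 ≤ ((c - a) * conj (b - a)).im)
    (h₃ : 0 ≤ ((d - a) * conj (b - a)).im) (h₄ : ((d - b) * conj (b - a)).re ≤ 0)
    (h₅ : ((d - c) * conj (b - a)).re ≤ 0) : GoodQuadruple ![a, b, c, d] := by
  have hn := normSq_nonneg (b - a)
  rcases eq_or_ne a b with rfl | hab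
  · simp [GoodQuadruple, frameCoord]
  have h_d1 : (d - a) / (b - a) = (d - b) / (b - a) + 1 := by
    rw [div_add_one (sub_ne_zero.2 hab.symm)]; ring
  have h_dc : (d - a) / (b - a) = (d - c) / (b - a) + (c - a) / (b - a) := by ring
  show 0 ≤ ((c - a) / (b - a)).re ∧ 0 ≤ ((c - a) / (b - a)).im ∧ 0 ≤ ((d - a) / (b - a)).im ∧
    ((d - a) / (b - a)).re ≤ 1 ∧ ((d - a) / (b - a)).re ≤ ((c - a) / (b - a)).re
  refine ⟨?_, ?_, ?_, ?_, ?_⟩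
  · rw [re_div_eq_mul_conj]; exact div_nonneg h₁ hn
  · rw [im_div_eq_mul_conj]; exact div_nonneg h₂ hn
  · rw [im_div_eq_mul_conj]; exact div_nonneg h₃ hn
  · rw [h_d1, add_re, one_re, re_div_eq_mul_conj]
    linarith [div_nonpos_of_nonpos_of_nonneg h₄ hn]
  · rw [h_dc, add_re, re_div_eq_mul_conj (d - c)]
    linarith [div_nonpos_of_nonpos_of_nonneg h₅ hn]

lemma frameCoord_const_add_mul (s : ℂ) {w : ℂ} (hw : w ≠ 0) (x : ℂ) :
    frameCoord (fun k => s + w * r k) (s + w * x) = frameCoord r x := by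
  simp only [frameCoord, add_sub_add_left_eq_sub, ← mul_sub, mul_div_mul_left _ _ hw]

lemma goodQuadruple_const_add_mul_iff (s : ℂ) {w : ℂ} (hw : w ≠ 0) :
    GoodQuadruple (fun k => s + w * r k) ↔ GoodQuadruple r := by
  simp only [GoodQuadruple, frameCoord_const_add_mul s hw]

end GoodQuadruple

lemma re_div_sub_mem_Icc_of_dist_le {a b z : ℂ} (hab : a ≠ b) (ha : dist z a ≤ dist a b)
    (hb : dist z b ≤ dist a b) : ((z - a) / (b - a)).re ∈ Icc 0 1 := by
  have hw : 0 < ‖b - a‖ := norm_pos_iff.2 (sub_ne_zero.2 hab.symm)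
  have hle {y : ℂ} (hy : dist z y ≤ dist a b) : ‖(z - y) / (b - a)‖ ≤ 1 := by
    rwa [norm_div, div_le_one hw, ← dist_eq_norm, ← dist_eq_norm, dist_comm b]
  have h1 : (z - a) / (b - a) - 1 = (z - b) / (b - a) := by
    rw [div_sub_one (sub_ne_zero.2 hab.symm)]; ring
  constructor
  · have := (abs_le.1 ((abs_re_le_norm _).trans (h1 ▸ hle hb))).1
    rw [sub_re, one_re] at this
    linarith
  · exact (re_le_norm _).trans (hle ha)

lemma exists_perm_goodQuadruple_of_re_mem_Icc {X Y : ℂ} (hX : X.re ∈ Icc 0 1)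
    (hY : Y.re ∈ Icc 0 1) : ∃ τ : Equiv.Perm (Fin 4), GoodQuadruple (![0, 1, X, Y] ∘ τ) := by
  obtain ⟨hX₀, hX₁⟩ := hX
  obtain ⟨hY₀, hY₁⟩ := hY
  -- Of the two points off the base, the one with the larger projection onto it is labelled `2`.
  rcases le_total 0 X.im with hXi | hXi <;> rcases le_total 0 Y.im with hYi | hYi <;>
    rcases le_total X.re Y.re with hXY | hXY <;>
    [refine ⟨.ofBijective ![0, 1, 3, 2] (by decide), .of_mul_conj 0 1 Y X ?_ ?_ ?_ ?_ ?_⟩;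
     refine ⟨.ofBijective ![0, 1, 2, 3] (by decide), .of_mul_conj 0 1 X Y ?_ ?_ ?_ ?_ ?_⟩;
     refine ⟨.ofBijective ![1, 2, 0, 3] (by decide), .of_mul_conj 1 X 0 Y ?_ ?_ ?_ ?_ ?_⟩;
     refine ⟨.ofBijective ![2, 0, 3, 1] (by decide), .of_mul_conj X 0 Y 1 ?_ ?_ ?_ ?_ ?_⟩;
     refine ⟨.ofBijective ![3, 0, 2, 1] (by decide), .of_mul_conj Y 0 X 1 ?_ ?_ ?_ ?_ ?_⟩;
     refine ⟨.ofBijective ![1, 3, 0, 2] (by decide), .of_mul_conj 1 Y 0 X ?_ ?_ ?_ ?_ ?_⟩;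
     refine ⟨.ofBijective ![1, 0, 2, 3] (by decide), .of_mul_conj 1 0 X Y ?_ ?_ ?_ ?_ ?_⟩;
     refine ⟨.ofBijective ![1, 0, 3, 2] (by decide), .of_mul_conj 1 0 Y X ?_ ?_ ?_ ?_ ?_⟩] <;>
    simp only [mul_re, mul_im, sub_re, sub_im, conj_re, conj_im, zero_re, zero_im, one_re,
      one_im] <;>
    nlinarith

lemma exists_perm_goodQuadruple (p : Fin 4 → ℂ) :
    ∃ σ : Equiv.Perm (Fin 4), GoodQuadruple (p ∘ σ) := by
  obtain ⟨σ, -, hσ⟩ := Finset.exists_max_image Finset.univ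
    (fun σ : Equiv.Perm (Fin 4) => dist (p (σ 0)) (p (σ 1))) Finset.univ_nonempty
  by_cases hab : p (σ 0) = p (σ 1)
  · exact ⟨σ, by simp [GoodQuadruple, frameCoord, hab]⟩
  have hdiam (k l : Fin 4) : dist (p (σ k)) (p (σ l)) ≤ dist (p (σ 0)) (p (σ 1)) := by
    rcases eq_or_ne k l with rfl | hkl
    · simp
    obtain ⟨τ, rfl, rfl⟩ := (by decide : ∀ k l : Fin 4, k ≠ l →
      ∃ τ : Equiv.Perm (Fin 4), τ 0 = k ∧ τ 1 = l) k l hkl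
    exact hσ (σ * τ) (Finset.mem_univ _)
  have hw : p (σ 1) - p (σ 0) ≠ 0 := sub_ne_zero.2 (Ne.symm hab)
  obtain ⟨τ, hτ⟩ := exists_perm_goodQuadruple_of_re_mem_Icc
    (re_div_sub_mem_Icc_of_dist_le hab (hdiam 2 0) (hdiam 2 1))
    (re_div_sub_mem_Icc_of_dist_le hab (hdiam 3 0) (hdiam 3 1))
  refine ⟨σ * τ, ?_⟩
  have hframe : p ∘ σ = fun k => p (σ 0) + (p (σ 1) - p (σ 0)) *
      ![0, 1, (p (σ 2) - p (σ 0)) / (p (σ 1) - p (σ 0)),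
        (p (σ 3) - p (σ 0)) / (p (σ 1) - p (σ 0))] k := by
    funext k; fin_cases k <;> simp [mul_div_cancel₀ _ hw]
  rw [Equiv.Perm.coe_mul, ← Function.comp_assoc, hframe]
  exact (goodQuadruple_const_add_mul_iff _ hw).2 hτ

/-- For any set of four (distinct) points in the plane, one can assign to
each point a closed quadrant wedge (angle π/2, unbounded range) apexed at that point
such that the induced symmetric communication graph is connected and the union of the
four wedges is the entire plane. -/
theorem four_points_connected_coverage (p : Fin 4 → ℂ) (hinj : Function.Injective p) :
    ∃ θ : Fin 4 → ℝ,
      (SimpleGraph.fromRel (fun i j =>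
        p j ∈ Wedge (p i) (θ i) (π / 2) ∧ p i ∈ Wedge (p j) (θ j) (π / 2))).Connected ∧
      (⋃ i, Wedge (p i) (θ i) (π / 2)) = Set.univ := by
  obtain ⟨σ, hσ⟩ := exists_perm_goodQuadruple p
  have h01 : (p ∘ σ) 0 ≠ (p ∘ σ) 1 := hinj.ne (σ.injective.ne (by decide))
  refine ⟨quadrantAngle (p ∘ σ) ∘ σ.symm, ?_, ?_⟩
  · refine symmCommGraph.connected_of_comp_equiv σ ?_
    simpa [Function.comp_assoc] using hσ.connected h01
  · rw [← σ.surjective.iUnion_comp]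
    simpa using hσ.iUnion_wedge_eq_univ h01
end

section
/- Three wedges of angle strictly less than π/2 cannot cover the plane; more generally, if a finite collection of wedges covers ℝ², then the sum of their angles is at least 2π. In particular, at least four wedges of angle π/2 are needed to cover the plane. -/
open Real Complex

/-! A wedge of angle `α` with apex `p` meets the disc of radius `R` about the origin inside
the sector of radius `R + ‖p‖` about `p`, whose area is at most `α (R + ‖p‖)² / 2`.
If the wedges cover the plane, comparing areas gives `π R² ≤ (∑ α) (R + c)² / 2` for every `R`,
where `c` bounds the `‖p‖`, and letting `R → ∞` yields `2π ≤ ∑ α`. -/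

open MeasureTheory Filter Topology Set Metric

lemma volume_polarCoord_symm_image_le {s : Set (ℝ × ℝ)} (hs : MeasurableSet s) :
    volume (polarCoord.symm '' s) ≤ ∫⁻ q in s, ENNReal.ofReal |q.1| := by
  simpa only [det_fderivPolarCoordSymm] using
    addHaar_image_le_lintegral_abs_det_fderiv volume hs
      fun q _ => (hasFDerivAt_polarCoord_symm q).hasFDerivWithinAt

lemma setLIntegral_abs_fst_Icc_prod_Icc {ρ : ℝ} (hρ : 0 ≤ ρ) (a b : ℝ) :
    ∫⁻ q in Icc 0 ρ ×ˢ Icc a b, ENNReal.ofReal |q.1| = ENNReal.ofReal ((b - a) * ρ ^ 2 / 2) := by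
  have hradial : ∫ x in 0..ρ, |x| = ρ ^ 2 / 2 := by
    rw [intervalIntegral.integral_congr (g := fun x => x) fun x hx =>
      abs_of_nonneg (uIcc_of_le hρ ▸ hx).1]
    simp
  rw [Measure.volume_eq_prod, ← Measure.prod_restrict, lintegral_prod _ (by fun_prop)]
  simp only [lintegral_const, Measure.restrict_apply MeasurableSet.univ, univ_inter,
    Real.volume_Icc]
  rw [lintegral_mul_const _ (by fun_prop), ← ofReal_integral_eq_lintegral_ofReal
    continuous_abs.integrableOn_Icc (ae_of_all _ fun x => abs_nonneg x),
    integral_Icc_eq_integral_Ioc, ← intervalIntegral.integral_of_le hρ, hradial,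
    ← ENNReal.ofReal_mul (by positivity), mul_comm, mul_div_assoc]

lemma wedge_inter_closedBall_subset (p : ℂ) (θ α ρ : ℝ) :
    Wedge p θ α ∩ closedBall p ρ ⊆
      (p + ·) '' (Complex.polarCoord.symm '' (Icc 0 ρ ×ˢ Icc θ (θ + α))) := by
  rintro _ ⟨⟨r, hr, t, ht, rfl⟩, hx⟩
  rw [mem_closedBall, Complex.dist_eq, add_sub_cancel_left, norm_mul,
    Complex.norm_exp_ofReal_mul_I, mul_one, Complex.norm_of_nonneg hr] at hx
  refine ⟨_, ⟨(r, θ + t), ⟨⟨hr, hx⟩, ⟨by linarith [ht.1], by linarith [ht.2]⟩⟩, rfl⟩, ?_⟩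
  rw [Complex.polarCoord_symm_apply, Complex.exp_mul_I, ← Complex.ofReal_cos,
    ← Complex.ofReal_sin]

lemma volume_wedge_inter_closedBall_le (p : ℂ) (θ α : ℝ) {ρ : ℝ} (hρ : 0 ≤ ρ) :
    volume (Wedge p θ α ∩ closedBall p ρ) ≤ ENNReal.ofReal (α * ρ ^ 2 / 2) := by
  set K := Icc 0 ρ ×ˢ Icc θ (θ + α)
  calc volume (Wedge p θ α ∩ closedBall p ρ)
      ≤ volume ((p + ·) '' (Complex.polarCoord.symm '' K)) :=
        measure_mono (wedge_inter_closedBall_subset p θ α ρ)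
    _ = volume (polarCoord.symm '' K) := by
        have hpolar : (Complex.polarCoord.symm : ℝ × ℝ → ℂ) =
            measurableEquivRealProd.symm ∘ polarCoord.symm :=
          funext fun q => (measurableEquivRealProd_symm_polarCoord_symm_apply q).symm
        rw [image_add_left, measure_preimage_add, hpolar, image_comp, MeasurableEquiv.image_symm]
        exact Complex.volume_preserving_equiv_real_prod.measure_preimage_equiv _
    _ ≤ ∫⁻ q in K, ENNReal.ofReal |q.1| :=
        volume_polarCoord_symm_image_le (measurableSet_Icc.prod measurableSet_Icc)
    _ = ENNReal.ofReal (α * ρ ^ 2 / 2) := by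
        rw [setLIntegral_abs_fst_Icc_prod_Icc hρ, add_sub_cancel_left]

lemma le_of_forall_mul_sq_le_mul_add_sq {a b c : ℝ}
    (h : ∀ R > 0, a * R ^ 2 ≤ b * (R + c) ^ 2) : a ≤ b := by
  have hlim : Tendsto (fun R : ℝ => b * (1 + c / R) ^ 2) atTop (𝓝 b) := by
    simpa using ((tendsto_const_nhds.div_atTop tendsto_id).const_add 1).pow 2 |>.const_mul b
  refine ge_of_tendsto hlim ?_
  filter_upwards [eventually_gt_atTop 0] with R hR
  have hscale : b * (R + c) ^ 2 = b * (1 + c / R) ^ 2 * R ^ 2 := by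
    field_simp
  exact le_of_mul_le_mul_right (hscale ▸ h R hR) (by positivity)

lemma pi_mul_sq_le_of_iUnion_wedge_eq_univ {ι : Type*} [Fintype ι] (p : ι → ℂ)
    (θ α : ι → ℝ) (hα : ∀ i, 0 ≤ α i) (hcov : ⋃ i, Wedge (p i) (θ i) (α i) = univ)
    {R : ℝ} (hR : 0 ≤ R) :
    π * R ^ 2 ≤ (∑ i, α i) / 2 * (R + ∑ i, ‖p i‖) ^ 2 := by
  set ρ := R + ∑ i, ‖p i‖
  have hball : closedBall (0 : ℂ) R ⊆ ⋃ i, Wedge (p i) (θ i) (α i) ∩ closedBall (p i) ρ := by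
    intro x hx
    obtain ⟨i, hi⟩ := mem_iUnion.1 (hcov ▸ mem_univ x : x ∈ ⋃ i, Wedge (p i) (θ i) (α i))
    refine mem_iUnion.2 ⟨i, hi, ?_⟩
    calc dist x (p i) ≤ dist x 0 + dist (p i) 0 := dist_triangle_right _ _ _
      _ ≤ ρ := add_le_add (mem_closedBall.1 hx)
          (by simpa using Finset.single_le_sum (fun j _ => norm_nonneg (p j)) (Finset.mem_univ i))
  have hvol : ENNReal.ofReal (π * R ^ 2) ≤ ENNReal.ofReal (∑ i, α i * ρ ^ 2 / 2) := by
    rw [ENNReal.ofReal_sum_of_nonneg fun i _ => by have := hα i; positivity]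
    calc ENNReal.ofReal (π * R ^ 2) = volume (closedBall (0 : ℂ) R) := by
          rw [Complex.volume_closedBall, mul_comm, ENNReal.ofReal_mul (sq_nonneg R),
            ENNReal.ofReal_pow hR, ← NNReal.coe_real_pi, ENNReal.ofReal_coe_nnreal]
      _ ≤ ∑ i, volume (Wedge (p i) (θ i) (α i) ∩ closedBall (p i) ρ) :=
          (measure_mono hball).trans (measure_iUnion_fintype_le _ _)
      _ ≤ ∑ i, ENNReal.ofReal (α i * ρ ^ 2 / 2) := Finset.sum_le_sum fun i _ =>
          volume_wedge_inter_closedBall_le _ _ _ (by positivity)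
  have := (ENNReal.ofReal_le_ofReal_iff
    (Finset.sum_nonneg fun i _ => by have := hα i; positivity)).1 hvol
  rw [← Finset.sum_div, ← Finset.sum_mul] at this
  linarith

/-- If a finite collection of wedges covers the plane, then the sum of
their angles is at least 2π; in particular, if all the wedges have angle π/2, there
must be at least four of them. (So three wedges of angle < π/2 cannot cover ℝ².) -/
theorem covering_wedges_angle_sum
    (n : ℕ) (p : Fin n → ℂ) (θ α : Fin n → ℝ) (hα : ∀ i, 0 ≤ α i)
    (hcov : (⋃ i, Wedge (p i) (θ i) (α i)) = Set.univ) :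
    2 * π ≤ ∑ i, α i ∧ ((∀ i, α i = π / 2) → 4 ≤ n) := by
  have hsum : 2 * π ≤ ∑ i, α i := by
    have := le_of_forall_mul_sq_le_mul_add_sq fun R hR =>
      pi_mul_sq_le_of_iUnion_wedge_eq_univ p θ α hα hcov hR.le
    linarith
  refine ⟨hsum, fun hquarter => ?_⟩
  simp only [hquarter, Finset.sum_const, Finset.card_univ, Fintype.card_fin, nsmul_eq_mul] at hsum
  have : (4 : ℝ) ≤ n := by nlinarith [pi_pos]
  exact_mod_cast this
end

section
/- For every angle α < π/2 and every n, there exists a set P of n points in the plane such that no assignment of wedges of angle α (one wedge per point, apex at the point, unbounded range) makes the induced symmetric communication graph connected while the union of wedges covers the entire plane. Specifically, if P lies on a vertical segment s and x is a point far enough to the right of s, any wedge of angle α < π/2 apexed at a point of P that covers x contains no other point of P; hence its antenna is isolated in the SCG. -/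
open Real Complex

lemma wedge_re_im {p x : ℂ} {θ α : ℝ} (h : x ∈ Wedge p θ α) :
    ∃ r : ℝ, 0 ≤ r ∧ ∃ t ∈ Set.Icc 0 α,
      x.re - p.re = r * Real.cos (θ + t) ∧ x.im - p.im = r * Real.sin (θ + t) := by
  obtain ⟨r, hr, t, ht, hx⟩ := h
  refine ⟨r, hr, t, ht, ?_, ?_⟩
  · have := congrArg Complex.re hx
    simp only [Complex.add_re, Complex.mul_re, Complex.ofReal_re, Complex.ofReal_im,
      Complex.exp_ofReal_mul_I_re, Complex.exp_ofReal_mul_I_im] at this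
    linarith
  · have := congrArg Complex.im hx
    simp only [Complex.add_im, Complex.mul_im, Complex.ofReal_re, Complex.ofReal_im,
      Complex.exp_ofReal_mul_I_re, Complex.exp_ofReal_mul_I_im] at this
    linarith

lemma aux1 {α θ t r : ℝ} (hα : α < π / 2) (ht : t ∈ Set.Icc 0 α) (hr : 0 ≤ r) :
    r * Real.cos (θ + t) * Real.cos (θ + α / 2) + r * Real.sin (θ + t) * Real.sin (θ + α / 2)
      ≠ -1 := by
  obtain ⟨ht0, htα⟩ := ht
  have hα0 : 0 ≤ α := le_trans ht0 htα
  have e : r * Real.cos (θ + t) * Real.cos (θ + α / 2)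
      + r * Real.sin (θ + t) * Real.sin (θ + α / 2) = r * Real.cos (t - α / 2) := by
    have h : (t - α/2) = (θ + t) - (θ + α/2) := by ring
    rw [h, Real.cos_sub]; ring
  rw [e]
  have hcos : 0 < Real.cos (t - α / 2) :=
    Real.cos_pos_of_mem_Ioo ⟨by linarith, by linarith⟩
  nlinarith

lemma aux2 {α θ t1 t2 r1 r2 : ℝ} (hα : α < π / 2)
    (ht1 : t1 ∈ Set.Icc 0 α) (ht2 : t2 ∈ Set.Icc 0 α) (hr1 : 0 ≤ r1) (hr2 : 0 ≤ r2) :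
    |r1 * Real.cos (θ + t1) * (r2 * Real.sin (θ + t2))
        - r1 * Real.sin (θ + t1) * (r2 * Real.cos (θ + t2))|
      ≤ Real.tan α * (r1 * Real.cos (θ + t1) * (r2 * Real.cos (θ + t2))
        + r1 * Real.sin (θ + t1) * (r2 * Real.sin (θ + t2))) := by
  obtain ⟨h10, h1α⟩ := ht1
  obtain ⟨h20, h2α⟩ := ht2
  have hα0 : 0 ≤ α := le_trans h10 h1α
  have hpi := Real.pi_pos
  set d := t2 - t1 with hd
  have hdle : |d| ≤ α := abs_le.2 ⟨by simp only [hd]; linarith, by simp only [hd]; linarith⟩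
  have e1 : r1 * Real.cos (θ + t1) * (r2 * Real.sin (θ + t2))
      - r1 * Real.sin (θ + t1) * (r2 * Real.cos (θ + t2)) = r1 * r2 * Real.sin d := by
    have h : d = (θ + t2) - (θ + t1) := by rw [hd]; ring
    rw [h, Real.sin_sub]; ring
  have e2 : r1 * Real.cos (θ + t1) * (r2 * Real.cos (θ + t2))
      + r1 * Real.sin (θ + t1) * (r2 * Real.sin (θ + t2)) = r1 * r2 * Real.cos d := by
    have h : d = (θ + t2) - (θ + t1) := by rw [hd]; ring
    rw [h, Real.cos_sub]; ring
  rw [e1, e2]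
  have hcosα : 0 < Real.cos α := Real.cos_pos_of_mem_Ioo ⟨by linarith, hα⟩
  have habs : |Real.sin d| = Real.sin |d| := by
    rcases abs_cases d with ⟨h, hd0⟩ | ⟨h, hd0⟩
    · have hda : d ≤ α := h ▸ hdle
      rw [h, _root_.abs_of_nonneg (Real.sin_nonneg_of_nonneg_of_le_pi hd0 (by linarith))]
    · have hda : -d ≤ α := h ▸ hdle
      have hneg : Real.sin d ≤ 0 := by
        have h2 := Real.sin_nonneg_of_nonneg_of_le_pi (show (0:ℝ) ≤ -d by linarith)
          (by linarith)
        rw [Real.sin_neg] at h2; linarith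
      rw [h, Real.sin_neg, _root_.abs_of_nonpos hneg]
  have hsin : |Real.sin d| ≤ Real.sin α := by
    rw [habs]
    exact Real.sin_le_sin_of_le_of_le_pi_div_two (by linarith [abs_nonneg d]) hα.le hdle
  have hcos : Real.cos α ≤ Real.cos d := by
    rw [← Real.cos_abs d]
    exact Real.cos_le_cos_of_nonneg_of_le_pi (abs_nonneg d) (by linarith) hdle
  have habs2 : |r1 * r2 * Real.sin d| = r1 * r2 * |Real.sin d| := by
    rw [abs_mul, _root_.abs_of_nonneg (mul_nonneg hr1 hr2)]
  rw [habs2, Real.tan_eq_sin_div_cos, div_mul_eq_mul_div, le_div_iff₀ hcosα]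
  have hkey : |Real.sin d| * Real.cos α ≤ Real.sin α * Real.cos d :=
    mul_le_mul hsin hcos hcosα.le (Real.sin_nonneg_of_nonneg_of_le_pi hα0 (by linarith))
  nlinarith [mul_le_mul_of_nonneg_left hkey (mul_nonneg hr1 hr2)]

/-- For every angle α < π/2 and every n, there is a set of n points in the
plane (lying on a vertical line/segment) such that no assignment of orientations to
α-wedges apexed at the points makes the induced symmetric communication graph connected
while the union of the wedges covers the entire plane. -/
theorem no_connected_coverage_below_pi_div_two
    (α : ℝ) (hα : α < π / 2) (n : ℕ) :
    ∃ p : Fin n → ℂ, Function.Injective p ∧ (∀ i j, (p i).re = (p j).re) ∧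
      ∀ θ : Fin n → ℝ,
        ¬ ((SimpleGraph.fromRel (fun i j =>
              p j ∈ Wedge (p i) (θ i) α ∧ p i ∈ Wedge (p j) (θ j) α)).Connected ∧
           (⋃ i, Wedge (p i) (θ i) α) = Set.univ) := by
  refine ⟨fun k => ((k : ℝ) : ℂ) * Complex.I, ?_, ?_, ?_⟩
  · intro a b h
    have h2 : ((a : ℝ) : ℂ) = ((b : ℝ) : ℂ) := mul_right_cancel₀ Complex.I_ne_zero h
    have h3 : (a : ℝ) = (b : ℝ) := by exact_mod_cast h2
    exact Fin.ext (by exact_mod_cast h3)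
  · intro i j
    simp [Complex.mul_re, Complex.I_re, Complex.I_im]
  · intro θ ⟨hconn, hcov⟩
    rcases Nat.lt_or_ge n 2 with hn2 | hn2
    · -- n = 0 or n = 1
      interval_cases n
      · exact hconn.nonempty.elim (fun i => i.elim0)
      · -- single wedge cannot cover the plane
        set y : ℂ := -Complex.exp ((θ 0 + α / 2 : ℝ) * Complex.I) with hy
        have hy_mem : y ∈ ⋃ i, Wedge ((((i : Fin 1) : ℝ) : ℂ) * Complex.I) (θ i) α := by
          rw [hcov]; trivial
        obtain ⟨i, hi⟩ := Set.mem_iUnion.1 hy_mem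
        have hi0 : i = 0 := Subsingleton.elim i 0
        subst hi0
        obtain ⟨r, hr, t, ht, h1, h2⟩ := wedge_re_im hi
        have hC : (((((0 : Fin 1) : ℝ)) : ℂ) * Complex.I) = 0 := by norm_num
        rw [hC] at h1 h2
        simp only [hy, Complex.neg_re, Complex.neg_im, Complex.zero_re, Complex.zero_im,
          Complex.exp_ofReal_mul_I_re, Complex.exp_ofReal_mul_I_im, sub_zero] at h1 h2
        refine aux1 hα ht hr (θ := θ 0) (t := t) (r := r) ?_
        linear_combination (-Real.cos (θ 0 + α / 2)) * h1
          + (-Real.sin (θ 0 + α / 2)) * h2 - Real.sin_sq_add_cos_sq (θ 0 + α / 2)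
    · -- n ≥ 2 : isolated antenna
      set T : ℝ := Real.tan α * n + 1 with hT
      have hx_mem : ((T : ℝ) : ℂ) ∈ ⋃ i, Wedge ((((i : Fin n) : ℝ) : ℂ) * Complex.I) (θ i) α := by
        rw [hcov]; trivial
      obtain ⟨k, hk⟩ := Set.mem_iUnion.1 hx_mem
      have : Nontrivial (Fin n) := Fin.nontrivial_iff_two_le.2 hn2
      obtain ⟨m, hm⟩ := exists_ne k
      obtain ⟨w⟩ := hconn.preconnected k m
      cases w with
      | nil => exact hm rfl
      | @cons _ b _ hadj w' =>
        rw [SimpleGraph.fromRel_adj] at hadj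
        obtain ⟨hne, hor⟩ := hadj
        have hb : (((b : ℝ) : ℂ) * Complex.I) ∈
            Wedge ((((k : Fin n) : ℝ) : ℂ) * Complex.I) (θ k) α :=
          hor.elim (fun h => h.1) (fun h => h.2)
        obtain ⟨r1, hr1, t1, ht1, hA1, hA2⟩ := wedge_re_im hk
        obtain ⟨r2, hr2, t2, ht2, hB1, hB2⟩ := wedge_re_im hb
        simp only [Complex.mul_re, Complex.mul_im, Complex.I_re, Complex.I_im,
          Complex.ofReal_re, Complex.ofReal_im, mul_zero, mul_one, zero_mul, sub_zero,
          zero_sub, zero_add, add_zero, sub_self] at hA1 hA2 hB1 hB2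
        -- hA1 : T = r1 * cos(θ k + t1), hA2 : -(k:ℝ) = r1 * sin(θ k + t1)
        -- hB1 : 0 = r2 * cos(θ k + t2), hB2 : (b:ℝ) - (k:ℝ) = r2 * sin(θ k + t2)
        have key := aux2 hα ht1 ht2 hr1 hr2 (θ := θ k)
        rw [← hA1, ← hA2, ← hB1, ← hB2] at key
        have htan : 0 ≤ Real.tan α := by
          have hα0 : 0 ≤ α := le_trans ht1.1 ht1.2
          have hcosα : 0 < Real.cos α := Real.cos_pos_of_mem_Ioo ⟨by linarith [Real.pi_pos], hα⟩
          have hsinα : 0 ≤ Real.sin α :=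
            Real.sin_nonneg_of_nonneg_of_le_pi hα0 (by linarith [Real.pi_pos])
          rw [Real.tan_eq_sin_div_cos]
          exact div_nonneg hsinα hcosα.le
        have hK0 : (0:ℝ) ≤ (k : ℝ) := by positivity
        have hKn : ((k : Fin n) : ℝ) < n := by exact_mod_cast k.isLt
        have hVK : (1:ℝ) ≤ |((b : Fin n) : ℝ) - ((k : Fin n) : ℝ)| := by
          have hne' : ((b : Fin n) : ℤ) ≠ ((k : Fin n) : ℤ) := by
            simpa [Fin.ext_iff] using fun h => hne (Fin.ext (by exact_mod_cast h)).symm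
          have h1 : (1:ℤ) ≤ |((b : Fin n) : ℤ) - ((k : Fin n) : ℤ)| :=
            Int.one_le_abs (sub_ne_zero.2 hne')
          exact_mod_cast h1
        set V : ℝ := ((b : Fin n) : ℝ)
        set K : ℝ := ((k : Fin n) : ℝ)
        have habsT : |T * (V - K) - -K * 0| = T * |V - K| := by
          rw [mul_zero, sub_zero, abs_mul, _root_.abs_of_nonneg (by positivity : (0:ℝ) ≤ T)]
        rw [habsT] at key
        have h5 : Real.tan α * (T * 0 + -K * (V - K)) ≤ Real.tan α * (K * |V - K|) := by
          apply mul_le_mul_of_nonneg_left _ htan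
          calc T * 0 + -K * (V - K) = -(K * (V - K)) := by ring
            _ ≤ |K * (V - K)| := neg_le_abs _
            _ = K * |V - K| := by rw [abs_mul, _root_.abs_of_nonneg hK0]
        have h6 : Real.tan α * (K * |V - K|) ≤ Real.tan α * ((n : ℝ) * |V - K|) :=
          mul_le_mul_of_nonneg_left
            (mul_le_mul_of_nonneg_right hKn.le (abs_nonneg _)) htan
        have h7 : T * |V - K| = Real.tan α * (n : ℝ) * |V - K| + |V - K| := by
          rw [hT]; ring
        have h8 : Real.tan α * ((n : ℝ) * |V - K|) = Real.tan α * (n : ℝ) * |V - K| :=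
          (mul_assoc _ _ _).symm
        linarith [key, h5, h6, h7, h8, hVK]
end

section
/- Let P be a set of three points forming an equilateral triangle, and let each point be assigned a wedge of angle α < π/3 with apex at that point. Then the induced symmetric communication graph on P is disconnected. -/
open Real Complex

/-! Two points of a wedge of angle `α < π/3` at the same distance `d > 0` from its apex are closer
than `d` to each other, since their directions differ by less than `π/3`. So in an equilateral
triangle the wedge at a vertex contains at most one of the other two vertices, and no vertex has
two neighbours in the graph. But a connected graph on `n ≥ 3` vertices has such a vertex: if all
degrees are at most one it has at most `n/2 < n - 1` edges. -/

lemma Real.abs_sin_lt_half_of_abs_lt_pi_div_six {x : ℝ} (hx : |x| < π / 6) :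
    |sin x| < 1 / 2 := by
  rw [abs_lt] at hx ⊢
  rw [← sin_pi_div_six, ← sin_neg]
  constructor <;> apply sin_lt_sin_of_lt_of_le_pi_div_two <;> linarith [pi_pos]

lemma Complex.norm_exp_mul_I_sub_exp_mul_I_lt_one {s t : ℝ} (h : |s - t| < π / 3) :
    ‖exp (s * I) - exp (t * I)‖ < 1 := by
  have hrot : exp (s * I) - exp (t * I) = exp (t * I) * (exp (I * ↑(s - t)) - 1) := by
    rw [mul_sub, ← exp_add]; push_cast; ring_nf
  rw [hrot, norm_mul, norm_exp_ofReal_mul_I, one_mul, norm_exp_I_mul_ofReal_sub_one, norm_mul,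
    Real.norm_eq_abs, Real.norm_eq_abs, abs_two]
  have hsin : |Real.sin ((s - t) / 2)| < 1 / 2 :=
    Real.abs_sin_lt_half_of_abs_lt_pi_div_six (by rw [abs_div, abs_two]; linarith)
  linarith

lemma dist_lt_of_mem_wedge {p a b : ℂ} {θ α : ℝ} (hα : α < π / 3)
    (ha : a ∈ Wedge p θ α) (hb : b ∈ Wedge p θ α) (hab : dist a p = dist b p)
    (hap : a ≠ p) :
    dist a b < dist a p := by
  obtain ⟨r, hr, s, hs, rfl⟩ := ha
  obtain ⟨r', hr', s', hs', rfl⟩ := hb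
  have hdist_apex : ∀ {ρ σ : ℝ}, 0 ≤ ρ → dist (p + ρ * exp (σ * I)) p = ρ := fun hρ => by
    rw [dist_eq_norm, add_sub_cancel_left, norm_mul, norm_exp_ofReal_mul_I, mul_one,
      norm_real, Real.norm_of_nonneg hρ]
  rw [hdist_apex hr, hdist_apex hr'] at hab
  subst hab
  have hr0 : 0 < r := by
    refine lt_of_le_of_ne hr fun h => hap ?_
    simp [← h]
  rw [hdist_apex hr, dist_eq_norm, add_sub_add_left_eq_sub, ← mul_sub, norm_mul, norm_real,
    Real.norm_of_nonneg hr]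
  refine mul_lt_of_lt_one_right hr0 (norm_exp_mul_I_sub_exp_mul_I_lt_one ?_)
  rw [abs_lt]
  constructor <;> linarith [hs.1, hs.2, hs'.1, hs'.2]

theorem SimpleGraph.Connected.exists_adj_adj_of_three_le_card {V : Type*} [Fintype V]
    {G : SimpleGraph V} (hG : G.Connected) (hV : 3 ≤ Fintype.card V) :
    ∃ v w₁ w₂, w₁ ≠ w₂ ∧ G.Adj v w₁ ∧ G.Adj v w₂ := by
  classical
  by_contra! hdeg
  have hdeg_le : ∀ v, G.degree v ≤ 1 := fun v => by
    rw [← card_neighborFinset_eq_degree, Finset.card_le_one]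
    intro w₁ h₁ w₂ h₂
    by_contra hne
    exact hdeg v w₁ w₂ hne (by simpa using h₁) (by simpa using h₂)
  have hsum : 2 * Fintype.card G.edgeSet ≤ Fintype.card V := by
    rw [← G.edgeFinset_card, ← sum_degrees_eq_twice_card_edges]
    simpa using Finset.sum_le_sum fun v (_ : v ∈ Finset.univ) => hdeg_le v
  have hedges := hG.card_vert_le_card_edgeSet_add_one
  rw [Nat.card_eq_fintype_card, Nat.card_eq_fintype_card] at hedges
  omega

/-- If three points form an equilateral triangle and each is assigned a
wedge of angle α < π/3 apexed at it, then the induced symmetric communication graph is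
disconnected. -/
theorem equilateral_triangle_scg_disconnected
    (p : Fin 3 → ℂ) (hinj : Function.Injective p)
    (heq : dist (p 0) (p 1) = dist (p 1) (p 2) ∧ dist (p 1) (p 2) = dist (p 0) (p 2))
    (α : ℝ) (hα : α < π / 3) (θ : Fin 3 → ℝ) :
    ¬ (SimpleGraph.fromRel (fun i j =>
        p j ∈ Wedge (p i) (θ i) α ∧ p i ∈ Wedge (p j) (θ j) α)).Connected := by
  have hside : ∀ a b : Fin 3, a ≠ b → dist (p a) (p b) = dist (p 0) (p 1) := by
    obtain ⟨h01, h12⟩ := heq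
    intro a b hab
    fin_cases a <;> fin_cases b <;>
      simp_all [dist_comm (p 1) (p 0), dist_comm (p 2) (p 0), dist_comm (p 2) (p 1)]
  intro hconn
  obtain ⟨i, j, k, hjk, hij, hik⟩ := hconn.exists_adj_adj_of_three_le_card (by simp)
  have hj : p j ∈ Wedge (p i) (θ i) α := hij.2.elim (·.1) (·.2)
  have hk : p k ∈ Wedge (p i) (θ i) α := hik.2.elim (·.1) (·.2)
  have hlt := dist_lt_of_mem_wedge hα hj hk (by rw [hside j i hij.ne', hside k i hik.ne'])
    (hinj.ne hij.ne')
  rw [hside j k hjk, hside j i hij.ne'] at hlt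
  exact hlt.false
end

section
/- Let A be a quadruplet of points with quadrant wedges covering the plane as in the connected-coverage construction, and let H be a closed half-plane containing A, bounded by a line ℓ with the complementary half-plane H'. Then either there exist two points of A whose wedges jointly cover H', or there exists a point a ∈ A whose wedge W_a intersected with H' leaves exactly two connected complementary regions T_a and B_a within H' (i.e., W_a divides H' into W_a ∩ H', T_a, B_a), and the two points of A coupled with a cover T_a and B_a respectively. -/
/-!
Pick the point `a = A i` whose wedge contains the direction `u` (the normal of `ℓ` into `H'`) and
rotate so that `W_a` is the quadrant `{re ≥ a.re, im ≥ a.im}`.  The two wedges coupled with `a`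
become `{re ≤ b.re, im ≥ b.im}` and `{re ≥ c.re, im ≤ c.im}`.  As a couple covers a half-plane,
`a.re ≤ b.re` and `a.im ≤ c.im`: otherwise the complement of the couple contains a strip and
everything below (resp. left of) both wedges, and every half-plane meets one of the two.
If `u` is along an axis, `H'` is covered by `W_a` and one coupled wedge.  Otherwise the line
`re = a.re` cuts `H' \ W_a` into two convex pieces `T` (left) and `B` (below); as `u` has
positive coordinates and `b, c ∈ H`, points of `H'` left of `b` lie above `b` and points of `H'`
below `c` lie right of `c`, so `T ⊆ W_b` and `B ⊆ W_c`.
-/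

open Real Complex

open ComplexConjugate

theorem mem_wedge_iff_mul_mem {p x ζ : ℂ} {θ θ' α : ℝ}
    (hζ : exp (θ' * I) = exp (θ * I) * ζ) :
    x ∈ Wedge p θ α ↔ x * ζ ∈ Wedge (p * ζ) θ' α := by
  have hζ0 : ζ ≠ 0 := right_ne_zero_of_mul (hζ ▸ Complex.exp_ne_zero _)
  have hexp : ∀ φ t : ℝ, exp ((φ + t : ℝ) * I) = exp (φ * I) * exp (t * I) := fun φ t => by
    rw [← Complex.exp_add]; push_cast; ring_nf
  simp only [Wedge, hexp, hζ]
  refine exists_congr fun r => and_congr_right fun _ => exists_congr fun t => and_congr_right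
    fun _ => ⟨fun h => by rw [h]; ring, fun h => mul_right_cancel₀ hζ0 (by rw [h]; ring)⟩

theorem mem_wedge_zero_pi_div_two {p x : ℂ} :
    x ∈ Wedge p 0 (π / 2) ↔ p.re ≤ x.re ∧ p.im ≤ x.im := by
  simp only [Wedge, zero_add, Set.mem_Icc]
  constructor
  · rintro ⟨r, hr, t, ⟨ht0, htπ⟩, rfl⟩
    have hcos := cos_nonneg_of_mem_Icc ⟨by linarith [pi_pos], htπ⟩
    have hsin := sin_nonneg_of_nonneg_of_le_pi ht0 (by linarith [pi_pos])
    simp only [add_re, add_im, re_ofReal_mul, im_ofReal_mul, exp_ofReal_mul_I_re,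
      exp_ofReal_mul_I_im]
    exact ⟨le_add_of_nonneg_right (mul_nonneg hr hcos),
      le_add_of_nonneg_right (mul_nonneg hr hsin)⟩
  · rintro ⟨hre, him⟩
    refine ⟨‖x - p‖, norm_nonneg _, (x - p).arg, ⟨arg_nonneg_iff.2 (by simpa),
      (abs_le.1 (abs_arg_le_pi_div_two_iff.2 (by simpa))).2⟩, ?_⟩
    rw [norm_mul_exp_arg_mul_I]; ring

theorem mem_wedge_pi_div_two_pi_div_two {p x : ℂ} :
    x ∈ Wedge p (π / 2) (π / 2) ↔ x.re ≤ p.re ∧ p.im ≤ x.im := by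
  rw [mem_wedge_iff_mul_mem (θ' := 0) (ζ := -I) (by simp), mem_wedge_zero_pi_div_two]
  simp [and_comm]

theorem mem_wedge_neg_pi_div_two_pi_div_two {p x : ℂ} :
    x ∈ Wedge p (-(π / 2)) (π / 2) ↔ p.re ≤ x.re ∧ x.im ≤ p.im := by
  rw [mem_wedge_iff_mul_mem (θ' := 0) (ζ := I) (by simp [Complex.exp_neg]),
    mem_wedge_zero_pi_div_two]
  simp [and_comm]

theorem re_mul_mul_conj_mul {x v ζ : ℂ} (hζ : ‖ζ‖ = 1) :
    (x * ζ * conj (v * ζ)).re = (x * conj v).re := by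
  rw [show x * ζ * conj (v * ζ) = x * conj v * (ζ * conj ζ) by rw [map_mul]; ring, mul_conj,
    normSq_eq_norm_sq, hζ]
  simp

theorem exists_mem_halfPlane_re_eq_or_im_lt {v : ℂ} (hv : v ≠ 0) (s m t : ℝ) :
    ∃ y : ℂ, s ≤ (y * conj v).re ∧ (y.re = m ∨ y.im < t) := by
  by_cases hv' : v.im = 0
  · have hre : v.re ≠ 0 := fun h => hv (Complex.ext h hv')
    exact ⟨⟨s / v.re, t - 1⟩, by simp [hv', div_mul_cancel₀ _ hre], Or.inr (by simp)⟩
  · exact ⟨⟨m, (s - m * v.re) / v.im⟩, by simp [div_mul_cancel₀ _ hv'], Or.inl rfl⟩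

theorem exists_mem_halfPlane_im_eq_or_re_lt {v : ℂ} (hv : v ≠ 0) (s m t : ℝ) :
    ∃ y : ℂ, s ≤ (y * conj v).re ∧ (y.im = m ∨ y.re < t) := by
  obtain ⟨y, hy, h⟩ := exists_mem_halfPlane_re_eq_or_im_lt (v := ⟨v.im, v.re⟩)
    (fun h => hv (Complex.ext (congrArg Complex.im h) (congrArg Complex.re h))) s m t
  exact ⟨⟨y.im, y.re⟩, by simpa [add_comm] using hy, h⟩

theorem isLinearMap_re_mul_conj (w : ℂ) : IsLinearMap ℝ fun y : ℂ => (y * conj w).re :=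
  (reLm ∘ₗ LinearMap.mulRight ℝ (conj w)).isLinear

section StandardFrame

variable {a b c v w : ℂ} {r s : ℝ}

theorem re_le_re_of_halfPlane_subset_wedge_union (hv : v ≠ 0)
    (h : {y | s ≤ (y * conj v).re} ⊆ Wedge a 0 (π / 2) ∪ Wedge b (π / 2) (π / 2)) :
    a.re ≤ b.re := by
  by_contra! hba
  obtain ⟨y, hy, hy'⟩ :=
    exists_mem_halfPlane_re_eq_or_im_lt hv s ((a.re + b.re) / 2) (min a.im b.im)
  have hmem := h hy
  simp only [Set.mem_union, mem_wedge_zero_pi_div_two, mem_wedge_pi_div_two_pi_div_two] at hmem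
  have := min_le_left a.im b.im
  have := min_le_right a.im b.im
  rcases hmem with ⟨h₁, h₂⟩ | ⟨h₁, h₂⟩ <;> rcases hy' with h₃ | h₃ <;> linarith

theorem im_le_im_of_halfPlane_subset_wedge_union (hv : v ≠ 0)
    (h : {y | s ≤ (y * conj v).re} ⊆ Wedge c (-(π / 2)) (π / 2) ∪ Wedge a 0 (π / 2)) :
    a.im ≤ c.im := by
  by_contra! hca
  obtain ⟨y, hy, hy'⟩ :=
    exists_mem_halfPlane_im_eq_or_re_lt hv s ((a.im + c.im) / 2) (min a.re c.re)
  have hmem := h hy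
  simp only [Set.mem_union, mem_wedge_zero_pi_div_two, mem_wedge_neg_pi_div_two_pi_div_two]
    at hmem
  have := min_le_left a.re c.re
  have := min_le_right a.re c.re
  rcases hmem with ⟨h₁, h₂⟩ | ⟨h₁, h₂⟩ <;> rcases hy' with h₃ | h₃ <;> linarith

theorem halfPlane_subset_wedge_union_of_re_eq_zero (hw : w.re = 0) (hw' : 0 < w.im)
    (hab : a.re ≤ b.re) (ha : (a * conj w).re ≤ r) (hb : (b * conj w).re ≤ r) :
    {y | r ≤ (y * conj w).re} ⊆ Wedge a 0 (π / 2) ∪ Wedge b (π / 2) (π / 2) := by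
  intro y hy
  simp only [Set.mem_ofPred_eq, mul_re, conj_re, conj_im, hw] at ha hb hy
  have hya : a.im ≤ y.im := le_of_mul_le_mul_right (by linarith) hw'
  have hyb : b.im ≤ y.im := le_of_mul_le_mul_right (by linarith) hw'
  rw [Set.mem_union, mem_wedge_zero_pi_div_two, mem_wedge_pi_div_two_pi_div_two]
  by_cases hay : a.re ≤ y.re
  · exact Or.inl ⟨hay, hya⟩
  · exact Or.inr ⟨by linarith, hyb⟩

theorem halfPlane_subset_wedge_union_of_im_eq_zero (hw : w.im = 0) (hw' : 0 < w.re)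
    (hac : a.im ≤ c.im) (ha : (a * conj w).re ≤ r) (hc : (c * conj w).re ≤ r) :
    {y | r ≤ (y * conj w).re} ⊆ Wedge a 0 (π / 2) ∪ Wedge c (-(π / 2)) (π / 2) := by
  intro y hy
  simp only [Set.mem_ofPred_eq, mul_re, conj_re, conj_im, hw] at ha hc hy
  have hya : a.re ≤ y.re := le_of_mul_le_mul_right (by linarith) hw'
  have hyc : c.re ≤ y.re := le_of_mul_le_mul_right (by linarith) hw'
  rw [Set.mem_union, mem_wedge_zero_pi_div_two, mem_wedge_neg_pi_div_two_pi_div_two]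
  by_cases hay : a.im ≤ y.im
  · exact Or.inl ⟨hya, hay⟩
  · exact Or.inr ⟨hyc, by linarith⟩

theorem exists_split_halfPlane_diff_wedge (hw : 0 < w.re) (hw' : 0 < w.im) (hab : a.re ≤ b.re)
    (hac : a.im ≤ c.im) (hb : (b * conj w).re ≤ r) (hc : (c * conj w).re ≤ r) :
    ∃ T B : Set ℂ, IsConnected T ∧ IsConnected B ∧ Disjoint T B ∧
      T ∪ B = {y | r ≤ (y * conj w).re} \ Wedge a 0 (π / 2) ∧
      T ⊆ Wedge b (π / 2) (π / 2) ∧ B ⊆ Wedge c (-(π / 2)) (π / 2) := by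
  set H := {y : ℂ | r ≤ (y * conj w).re}
  have hH : Convex ℝ H := convex_halfSpace_ge (isLinearMap_re_mul_conj w) r
  have hre := reLm.isLinear
  have him := imLm.isLinear
  simp only [mul_re, conj_re, conj_im, mul_neg, sub_neg_eq_add] at hb hc
  refine ⟨H ∩ {y | y.re < a.re}, H ∩ ({y | a.re ≤ y.re} ∩ {y | y.im < a.im}),
    (hH.inter (convex_halfSpace_lt hre _)).isConnected ?_,
    (hH.inter ((convex_halfSpace_ge hre _).inter (convex_halfSpace_lt him _))).isConnected ?_,
    Set.disjoint_left.2 fun y ⟨_, (hy : y.re < a.re)⟩ ⟨_, (hy' : a.re ≤ y.re), _⟩ =>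
      hy'.not_gt hy, ?_, ?_, ?_⟩
  · refine ⟨⟨a.re - 1, (r - (a.re - 1) * w.re) / w.im⟩, ?_, by simp⟩
    simp [H, div_mul_cancel₀ _ hw'.ne']
  · set x := max a.re ((r - (a.im - 1) * w.im) / w.re)
    have hx := (div_le_iff₀ hw).1 (le_max_right a.re ((r - (a.im - 1) * w.im) / w.re))
    refine ⟨⟨x, a.im - 1⟩, ?_, show a.re ≤ x from le_max_left _ _, by simp⟩
    simp only [H, Set.mem_ofPred_eq, mul_re, conj_re, conj_im]
    linarith
  · ext y
    simp only [H, Set.mem_union, Set.mem_inter_iff, Set.mem_sdiff, Set.mem_ofPred_eq,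
      mem_wedge_zero_pi_div_two, not_and, not_le]
    constructor
    · rintro (⟨hy, h⟩ | ⟨hy, h, h'⟩) <;> exact ⟨hy, fun h'' => by linarith⟩
    · rintro ⟨hy, h⟩
      by_cases h' : a.re ≤ y.re
      exacts [Or.inr ⟨hy, h', h h'⟩, Or.inl ⟨hy, not_le.1 h'⟩]
  · rintro y ⟨hy, hya⟩
    simp only [H, Set.mem_ofPred_eq, mul_re, conj_re, conj_im] at hy hya
    have hyb : y.re * w.re ≤ b.re * w.re := mul_le_mul_of_nonneg_right (by linarith) hw.le
    exact mem_wedge_pi_div_two_pi_div_two.2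
      ⟨by linarith, le_of_mul_le_mul_right (by linarith) hw'⟩
  · rintro y ⟨hy, hya, hya'⟩
    simp only [H, Set.mem_ofPred_eq, mul_re, conj_re, conj_im] at hy hya hya'
    have hyc : y.im * w.im ≤ c.im * w.im := mul_le_mul_of_nonneg_right (by linarith) hw'.le
    exact mem_wedge_neg_pi_div_two_pi_div_two.2
      ⟨le_of_mul_le_mul_right (by linarith) hw, by linarith⟩

end StandardFrame

theorem exp_mul_I_eq_of_sub_eq {θ θ' φ : ℝ} {m : ℤ} (h : θ' - θ = φ + 2 * π * m) :
    exp (φ * I) = exp (θ' * I) * exp (↑(-θ) * I) := by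
  rw [← Complex.exp_add, Complex.exp_eq_exp_iff_exists_int]
  refine ⟨-m, ?_⟩
  have h' := congrArg (fun x : ℝ => (x : ℂ)) h
  push_cast at h' ⊢
  linear_combination (-I) * h'

theorem halfPlane_division_of_mem_quadrant {a b c u : ℂ} {θ θb θc r : ℝ} {m m' : ℤ}
    (hu : u ≠ 0) (hθb : θb - θ = π / 2 + 2 * π * m) (hθc : θc - θ = -(π / 2) + 2 * π * m')
    (hre : 0 ≤ (u * exp (↑(-θ) * I)).re) (him : 0 ≤ (u * exp (↑(-θ) * I)).im)
    (hab : ∃ (v : ℂ) (s : ℝ), v ≠ 0 ∧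
      {x : ℂ | s ≤ (x * conj v).re} ⊆ Wedge a θ (π / 2) ∪ Wedge b θb (π / 2))
    (hca : ∃ (v : ℂ) (s : ℝ), v ≠ 0 ∧
      {x : ℂ | s ≤ (x * conj v).re} ⊆ Wedge c θc (π / 2) ∪ Wedge a θ (π / 2))
    (ha : (a * conj u).re ≤ r) (hb : (b * conj u).re ≤ r) (hc : (c * conj u).re ≤ r) :
    {x | r ≤ (x * conj u).re} ⊆ Wedge a θ (π / 2) ∪ Wedge b θb (π / 2) ∨
    {x | r ≤ (x * conj u).re} ⊆ Wedge a θ (π / 2) ∪ Wedge c θc (π / 2) ∨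
    ∃ T B : Set ℂ, IsConnected T ∧ IsConnected B ∧ Disjoint T B ∧
      T ∪ B = {x | r ≤ (x * conj u).re} \ Wedge a θ (π / 2) ∧
      T ⊆ Wedge b θb (π / 2) ∧ B ⊆ Wedge c θc (π / 2) := by
  set ζ := exp (↑(-θ) * I)
  have hζ : ‖ζ‖ = 1 := norm_exp_ofReal_mul_I _
  have hζ0 : ζ ≠ 0 := Complex.exp_ne_zero _
  set f := Homeomorph.mulRight₀ ζ hζ0
  have hH (v : ℂ) (s : ℝ) :
      {x : ℂ | s ≤ (x * conj v).re} = f ⁻¹' {y | s ≤ (y * conj (v * ζ)).re} := by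
    ext x
    change _ ↔ s ≤ (x * ζ * conj (v * ζ)).re
    rw [re_mul_mul_conj_mul hζ, Set.mem_ofPred_eq]
  have hWa : Wedge a θ (π / 2) = f ⁻¹' Wedge (a * ζ) 0 (π / 2) :=
    Set.ext fun _ => mem_wedge_iff_mul_mem (exp_mul_I_eq_of_sub_eq (m := 0) (by simp))
  have hWb : Wedge b θb (π / 2) = f ⁻¹' Wedge (b * ζ) (π / 2) (π / 2) :=
    Set.ext fun _ => mem_wedge_iff_mul_mem (exp_mul_I_eq_of_sub_eq hθb)
  have hWc : Wedge c θc (π / 2) = f ⁻¹' Wedge (c * ζ) (-(π / 2)) (π / 2) :=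
    Set.ext fun _ => mem_wedge_iff_mul_mem (exp_mul_I_eq_of_sub_eq hθc)
  have hf {s t : Set ℂ} : f ⁻¹' s ⊆ f ⁻¹' t ↔ s ⊆ t := f.surjective.preimage_subset_preimage_iff
  obtain ⟨v, s, hv, hvs⟩ := hab
  obtain ⟨v', s', hv', hvs'⟩ := hca
  rw [hH, hWa, hWb, ← Set.preimage_union, hf] at hvs
  rw [hH, hWa, hWc, ← Set.preimage_union, hf] at hvs'
  have hab' := re_le_re_of_halfPlane_subset_wedge_union (mul_ne_zero hv hζ0) hvs
  have hac' := im_le_im_of_halfPlane_subset_wedge_union (mul_ne_zero hv' hζ0) hvs'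
  rw [← re_mul_mul_conj_mul hζ] at ha hb hc
  have hw : u * ζ ≠ 0 := mul_ne_zero hu hζ0
  rw [hH, hWa, hWb, hWc, ← Set.preimage_union, ← Set.preimage_union, hf, hf]
  obtain hre | hre := hre.eq_or_lt
  · exact Or.inl (halfPlane_subset_wedge_union_of_re_eq_zero hre.symm
      (him.lt_of_ne fun h => hw (Complex.ext hre.symm h.symm)) hab' ha hb)
  obtain him | him := him.eq_or_lt
  · exact Or.inr (Or.inl (halfPlane_subset_wedge_union_of_im_eq_zero him.symm hre hac' ha hc))
  obtain ⟨T, B, hT, hB, hTB, hunion, hTb, hBc⟩ :=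
    exists_split_halfPlane_diff_wedge hre him hab' hac' hb hc
  refine Or.inr (Or.inr ⟨f ⁻¹' T, f ⁻¹' B, f.isConnected_preimage.2 hT,
    f.isConnected_preimage.2 hB, hTB.preimage f, ?_, Set.preimage_mono hTb,
    Set.preimage_mono hBc⟩)
  rw [← Set.preimage_union, hunion, Set.preimage_sdiff]

theorem exists_mul_neg_I_pow_mem_quadrant (z : ℂ) :
    ∃ n : Fin 4, 0 ≤ (z * (-I) ^ (n : ℕ)).re ∧ 0 ≤ (z * (-I) ^ (n : ℕ)).im := by
  rcases le_total 0 z.re with hre | hre <;> rcases le_total 0 z.im with him | him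
  · exact ⟨0, by simpa using ⟨hre, him⟩⟩
  · exact ⟨3, by simpa [pow_succ] using ⟨him, hre⟩⟩
  · exact ⟨1, by simpa using ⟨him, hre⟩⟩
  · exact ⟨2, by simpa [pow_succ] using ⟨hre, him⟩⟩

section Orientation

variable {θ : Fin 4 → ℝ} {φ : ℝ} {σ : Equiv.Perm (Fin 4)}

theorem exists_mem_quadrant_of_orientation (hσ : ∀ i, θ i = φ + (σ i : ℕ) * (π / 2))
    (u : ℂ) : ∃ i, 0 ≤ (u * exp (↑(-θ i) * I)).re ∧ 0 ≤ (u * exp (↑(-θ i) * I)).im := by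
  obtain ⟨n, hn⟩ := exists_mul_neg_I_pow_mem_quadrant (u * exp (↑(-φ) * I))
  refine ⟨σ.symm n, ?_⟩
  have hexp : exp (↑(-θ (σ.symm n)) * I) = exp (↑(-φ) * I) * (-I) ^ (n : ℕ) := by
    rw [hσ, Equiv.apply_symm_apply, ← exp_neg_pi_div_two_mul_I, ← Complex.exp_nat_mul,
      ← Complex.exp_add]
    push_cast; ring_nf
  rwa [hexp, ← mul_assoc]

theorem exists_orientation_sub_eq (hσ : ∀ i, θ i = φ + (σ i : ℕ) * (π / 2)) (i : Fin 4)
    (n : Fin 4) :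
    ∃ m : ℤ, θ (σ.symm (σ i + n)) - θ i = (n : ℕ) * (π / 2) + 2 * π * m := by
  obtain ⟨q, hq⟩ : ∃ q : ℕ, ((σ i + n : Fin 4) : ℕ) + 4 * q = σ i + n :=
    ⟨((σ i : ℕ) + n) / 4, by rw [Fin.val_add]; omega⟩
  refine ⟨-q, ?_⟩
  have hq' := congrArg (fun k : ℕ => (k : ℝ)) hq
  push_cast at hq' ⊢
  rw [hσ, hσ, Equiv.apply_symm_apply]
  linear_combination (π / 2) * hq'

theorem exists_coupled_orientations (hσ : ∀ i, θ i = φ + (σ i : ℕ) * (π / 2)) (i : Fin 4) :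
    ∃ j k, j ≠ i ∧ k ≠ i ∧ j ≠ k ∧ (∃ m : ℤ, θ j - θ i = π / 2 + 2 * π * m) ∧
      (∃ m : ℤ, θ k - θ i = -(π / 2) + 2 * π * m) := by
  obtain ⟨m, hm⟩ := exists_orientation_sub_eq hσ i 1
  obtain ⟨m', hm'⟩ := exists_orientation_sub_eq hσ i 3
  have hne : ∀ a : Fin 4, a + 1 ≠ a ∧ a + 3 ≠ a ∧ a + 1 ≠ a + 3 := by decide
  obtain ⟨h₁, h₃, h₁₃⟩ := hne (σ i)
  refine ⟨σ.symm (σ i + 1), σ.symm (σ i + 3), ?_, ?_, σ.symm.injective.ne h₁₃,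
    ⟨m, by simpa using hm⟩, ⟨m' + 1, ?_⟩⟩
  · exact fun h => h₁ (σ.symm_apply_eq.1 h)
  · exact fun h => h₃ (σ.symm_apply_eq.1 h)
  · simp only [Fin.isValue, Fin.coe_ofNat_eq_mod, Nat.mod_succ, Nat.cast_ofNat] at hm'
    push_cast at hm' ⊢; linarith

end Orientation

theorem quadruplet_halfplane_division_general
    (A : Fin 4 → ℂ) (θ : Fin 4 → ℝ) (u : ℂ) (hu : u ≠ 0) (r : ℝ)
    (hAH : ∀ i, (A i * (starRingEnd ℂ) u).re ≤ r)
    (horient : ∃ (φ : ℝ) (σ : Equiv.Perm (Fin 4)), ∀ i, θ i = φ + (σ i : ℕ) * (π / 2))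
    (hcouple : ∀ i j, (∃ k : ℤ, θ j - θ i = π / 2 + 2 * π * k) →
      ∃ (v : ℂ) (s : ℝ), v ≠ 0 ∧ {x : ℂ | s ≤ (x * (starRingEnd ℂ) v).re} ⊆
        Wedge (A i) (θ i) (π / 2) ∪ Wedge (A j) (θ j) (π / 2)) :
    (∃ i j, i ≠ j ∧ {x : ℂ | r ≤ (x * (starRingEnd ℂ) u).re} ⊆
        Wedge (A i) (θ i) (π / 2) ∪ Wedge (A j) (θ j) (π / 2)) ∨
    (∃ i, ∃ T Bm : Set ℂ, T.Nonempty ∧ Bm.Nonempty ∧ IsConnected T ∧ IsConnected Bm ∧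
      Disjoint T Bm ∧
      T ∪ Bm = {x : ℂ | r ≤ (x * (starRingEnd ℂ) u).re} \ Wedge (A i) (θ i) (π / 2) ∧
      ∃ j k, j ≠ i ∧ k ≠ i ∧ j ≠ k ∧
        (∃ m : ℤ, θ j - θ i = π / 2 + 2 * π * m) ∧
        (∃ m : ℤ, θ k - θ i = -(π / 2) + 2 * π * m) ∧
        T ⊆ Wedge (A j) (θ j) (π / 2) ∧ Bm ⊆ Wedge (A k) (θ k) (π / 2)) := by
  obtain ⟨φ, σ, hσ⟩ := horient
  obtain ⟨i, hre, him⟩ := exists_mem_quadrant_of_orientation hσ u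
  obtain ⟨j, k, hji, hki, hjk, ⟨m, hj⟩, ⟨m', hk⟩⟩ := exists_coupled_orientations hσ i
  rcases halfPlane_division_of_mem_quadrant hu hj hk hre him (hcouple i j ⟨m, hj⟩)
      (hcouple k i ⟨-m', by push_cast; linarith⟩) (hAH i) (hAH j) (hAH k) with
    h | h | ⟨T, B, hT, hB, hTB, hunion, hTj, hBk⟩
  · exact Or.inl ⟨i, j, hji.symm, h⟩
  · exact Or.inl ⟨i, k, hki.symm, h⟩
  · exact Or.inr ⟨i, T, B, hT.nonempty, hB.nonempty, hT, hB, hTB, hunion,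
      j, k, hji, hki, hjk, ⟨m, hj⟩, ⟨m', hk⟩, hTj, hBk⟩

/-- Let `A` be a quadruplet of points whose π/2-wedges cover the plane as
in the connected-coverage construction (orientations a common rotation of
{0, π/2, π, 3π/2}, each couple of wedges with orientations differing by π/2 covering a
closed half-plane), let `H = {x : ⟨x,u⟩ ≤ r}` be a closed half-plane containing `A`,
and let `H' = {x : ⟨x,u⟩ ≥ r}` be the complementary closed half-plane.  Then either two
points of `A` have wedges jointly covering `H'`, or there is `a = A i` such that
`H' \ W_a` splits into exactly two nonempty connected regions `T` and `Bm`
(so `H'` is divided into `W_a ∩ H'`, `T`, `Bm`) and the two points of `A` coupled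
with `a` (orientations θ i + π/2 and θ i − π/2, mod 2π) cover `T` and `Bm`
respectively. -/
theorem quadruplet_halfplane_division
    (A : Fin 4 → ℂ) (θ : Fin 4 → ℝ) (u : ℂ) (hu : u ≠ 0) (r : ℝ)
    (hAH : ∀ i, (A i * (starRingEnd ℂ) u).re ≤ r)
    (hcov : (⋃ i, Wedge (A i) (θ i) (π / 2)) = Set.univ)
    (horient : ∃ (φ : ℝ) (σ : Equiv.Perm (Fin 4)), ∀ i, θ i = φ + (σ i : ℕ) * (π / 2))
    (hcouple : ∀ i j, (∃ k : ℤ, θ j - θ i = π / 2 + 2 * π * k) →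
      ∃ (v : ℂ) (s : ℝ), v ≠ 0 ∧ {x : ℂ | s ≤ (x * (starRingEnd ℂ) v).re} ⊆
        Wedge (A i) (θ i) (π / 2) ∪ Wedge (A j) (θ j) (π / 2)) :
    (∃ i j, i ≠ j ∧ {x : ℂ | r ≤ (x * (starRingEnd ℂ) u).re} ⊆
        Wedge (A i) (θ i) (π / 2) ∪ Wedge (A j) (θ j) (π / 2)) ∨
    (∃ i, ∃ T Bm : Set ℂ, T.Nonempty ∧ Bm.Nonempty ∧ IsConnected T ∧ IsConnected Bm ∧
      Disjoint T Bm ∧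
      T ∪ Bm = {x : ℂ | r ≤ (x * (starRingEnd ℂ) u).re} \ Wedge (A i) (θ i) (π / 2) ∧
      ∃ j k, j ≠ i ∧ k ≠ i ∧ j ≠ k ∧
        (∃ m : ℤ, θ j - θ i = π / 2 + 2 * π * m) ∧
        (∃ m : ℤ, θ k - θ i = -(π / 2) + 2 * π * m) ∧
        T ⊆ Wedge (A j) (θ j) (π / 2) ∧ Bm ⊆ Wedge (A k) (θ k) (π / 2)) :=
  quadruplet_halfplane_division_general A θ u hu r hAH horient hcouple
end

section
/- Let P ⊂ ℝ² be a finite point set and lay a grid of cells of side length 7 (semi-open squares). Call a cell full if it contains at least 4 points of P. Let UDG(P) be the graph on P with edges between points at distance ≤ 1. Then any path in UDG(P) that begins at a point in a cell C and reaches a point outside the 3×3 block of cells centered at C must pass through a point lying in a full cell of C's block other than C itself. -/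
/-!
Work with the integer coordinates `⌊x 0⌋, ⌊x 1⌋`: the cell `(a, b)` consists of the points whose
integer coordinates have quotients `a` and `b` by `7`, and a step of length `≤ 1` changes each
integer coordinate by at most `1`, so a coordinate cannot skip a value. Stop the path when it first
leaves the block, say through the column `a' = a ± 1`. After its last visit to the central column
the path stays in column `a'` and takes all `7` integer abscissae of it. If these `7` points miss
the top or the bottom row of the block, they lie in two rows and one row gets `4` of them;
otherwise between them the path crosses the middle row, still inside column `a'`, meeting `7`
points there.
-/

open Real

/-- The semi-open grid cell of side length 7 with integer grid coordinates `(a, b)`. -/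
def cell (a b : ℤ) : Set (EuclideanSpace ℝ (Fin 2)) :=
  {x | 7 * (a : ℝ) ≤ x 0 ∧ x 0 < 7 * (a : ℝ) + 7 ∧ 7 * (b : ℝ) ≤ x 1 ∧ x 1 < 7 * (b : ℝ) + 7}

open Finset

def UnitSteps (u : ℕ → ℤ) (n : ℕ) : Prop :=
  ∀ t < n, |u (t + 1) - u t| ≤ 1

theorem abs_floor_sub_floor_le {r s : ℝ} {n : ℤ} (h : |r - s| ≤ n) : |⌊r⌋ - ⌊s⌋| ≤ n := by
  rw [abs_le] at h ⊢
  have hr : ⌊r⌋ ≤ ⌊s⌋ + n := by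
    rw [← Int.floor_add_intCast]; exact Int.floor_mono (by linarith)
  have hs : ⌊s⌋ ≤ ⌊r⌋ + n := by
    rw [← Int.floor_add_intCast]; exact Int.floor_mono (by linarith)
  omega

theorem unitSteps_floor_apply {ι : Type*} [Fintype ι] {p : ℕ → EuclideanSpace ℝ ι} {k : ℕ}
    (hstep : ∀ i < k, dist (p i) (p (i + 1)) ≤ 1) (j : ι) :
    UnitSteps (fun i => ⌊p i j⌋) k := fun t ht =>
  abs_floor_sub_floor_le <| by
    push_cast
    calc |p (t + 1) j - p t j| = dist (p (t + 1) j) (p t j) := (Real.dist_eq _ _).symm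
      _ ≤ dist (p (t + 1)) (p t) := PiLp.dist_apply_le _ _ j
      _ ≤ 1 := by rw [dist_comm]; exact_mod_cast hstep t ht

theorem floor_div_seven_eq_iff {r : ℝ} {a : ℤ} :
    ⌊r⌋ / 7 = a ↔ 7 * (a : ℝ) ≤ r ∧ r < 7 * a + 7 := by
  have hlo : 7 * (a : ℝ) ≤ r ↔ 7 * a ≤ ⌊r⌋ := by rw [Int.le_floor]; push_cast; rfl
  have hhi : r < 7 * a + 7 ↔ ⌊r⌋ < 7 * a + 7 := by rw [Int.floor_lt]; push_cast; rfl
  rw [hlo, hhi]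
  omega

theorem mem_cell_iff {x : EuclideanSpace ℝ (Fin 2)} {a b : ℤ} :
    x ∈ cell a b ↔ ⌊x 0⌋ / 7 = a ∧ ⌊x 1⌋ / 7 = b := by
  simp only [cell, Set.mem_ofPred_eq, floor_div_seven_eq_iff, and_assoc]

theorem Finset.card_image_comp_le {α β γ : Type*} [DecidableEq β] [DecidableEq γ]
    (s : Finset α) (f : α → β) (g : β → γ) : #(s.image (g ∘ f)) ≤ #(s.image f) := by
  rw [← image_image]
  exact card_image_le

theorem Finset.le_card_of_Ico_subset {s : Finset ℤ} {c : ℤ} {n : ℕ} (h : Ico c (c + n) ⊆ s) :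
    n ≤ #s := by
  simpa using card_le_card h

namespace UnitSteps

variable {u w : ℕ → ℤ} {m : ℕ}

theorem mono {n : ℕ} (hu : UnitSteps u n) (hmn : m ≤ n) : UnitSteps u m :=
  fun t ht => hu t (ht.trans_le hmn)

theorem exists_eq {i j : ℕ} (hu : UnitSteps u m) (hi : i ≤ m) (hj : j ≤ m) {v : ℤ}
    (hv : v ∈ Set.uIcc (u i) (u j)) : ∃ t ∈ Set.uIcc i j, u t = v := by
  wlog hij : i ≤ j generalizing i j
  · obtain ⟨t, ht, hut⟩ := this hj hi (Set.uIcc_comm (u i) (u j) ▸ hv) (le_of_not_ge hij)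
    exact ⟨t, Set.uIcc_comm i j ▸ ht, hut⟩
  rw [Set.uIcc_of_le hij]
  induction j, hij using Nat.le_induction with
  | base => exact ⟨i, Set.left_mem_Icc.mpr le_rfl, by simpa [eq_comm] using hv⟩
  | succ j hij ih =>
    by_cases hvj : v ∈ Set.uIcc (u i) (u j)
    · obtain ⟨t, ht, hut⟩ := ih (by omega) hvj
      exact ⟨t, Set.Icc_subset_Icc_right j.le_succ ht, hut⟩
    · refine ⟨j + 1, Set.right_mem_Icc.mpr (by omega), ?_⟩
      have := abs_le.mp (hu j (by omega))
      rw [Set.mem_uIcc] at hv hvj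
      omega

theorem exists_crossing_of_exit (hu : UnitSteps u m) {a : ℤ} (h0 : u 0 / 7 = a)
    (hin : ∀ t < m, |u t / 7 - a| ≤ 1) (hout : 1 < |u m / 7 - a|) :
    ∃ a', |a' - a| = 1 ∧ ∃ i₀ < m, (∀ t ∈ Ioo i₀ m, u t / 7 = a') ∧
      Ico (7 * a') (7 * a' + 7) ⊆ (Ioo i₀ m).image u := by
  obtain ⟨a', hbetween⟩ : ∃ a',
      (a' = a + 1 ∧ a + 1 < u m / 7) ∨ (a' = a - 1 ∧ u m / 7 < a - 1) := by
    rcases lt_abs.mp hout with h | h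
    · exact ⟨a + 1, by omega⟩
    · exact ⟨a - 1, by omega⟩
  have hi₀ : u (Nat.findGreatest (fun t => u t / 7 = a) m) / 7 = a :=
    Nat.findGreatest_spec (P := fun t => u t / 7 = a) (Nat.zero_le m) h0
  have hlast : ∀ t, Nat.findGreatest (fun t => u t / 7 = a) m < t → t ≤ m → u t / 7 ≠ a :=
    fun t h1 h2 => Nat.findGreatest_is_greatest h1 h2
  have hi₀m := Nat.findGreatest_le (P := fun t => u t / 7 = a) m
  generalize Nat.findGreatest (fun t => u t / 7 = a) m = i₀ at hi₀ hlast hi₀m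
  replace hi₀m : i₀ < m := hi₀m.lt_of_ne fun h => by rw [h] at hi₀; omega
  -- Switching sides inside `(i₀, m)` would pass through the central column again.
  have hside : ∀ t ∈ Ioo i₀ m, u t / 7 = a' := by
    intro t ht
    rw [mem_Ioo] at ht
    by_contra hne
    have := abs_le.mp (hin t ht.2)
    have := hlast t ht.1 ht.2.le
    obtain ⟨t', ht', hut'⟩ :=
      hu.exists_eq (v := 7 * a) ht.2.le le_rfl (by rw [Set.mem_uIcc]; omega)
    rw [Set.mem_uIcc] at ht'
    exact hlast t' (by omega) (by omega) (by omega)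
  refine ⟨a', by rcases hbetween with ⟨rfl, -⟩ | ⟨rfl, -⟩ <;> simp, i₀, hi₀m, hside,
    fun v hv => ?_⟩
  rw [mem_Ico] at hv
  obtain ⟨t, ht, rfl⟩ := hu.exists_eq hi₀m.le le_rfl (v := v) (by rw [Set.mem_uIcc]; omega)
  rw [Set.uIcc_of_le hi₀m.le] at ht
  refine mem_image_of_mem u (mem_Ioo.mpr ⟨ht.1.lt_of_ne ?_, ht.2.lt_of_ne ?_⟩)
  · rintro rfl; omega
  · rintro rfl; omega

theorem exists_row_four_le_card (hw : UnitSteps w m) {i₀ : ℕ} {b : ℤ}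
    (hin : ∀ t ∈ Ioo i₀ m, |w t / 7 - b| ≤ 1)
    (hseven : 7 ≤ #((Ioo i₀ m).image fun t => (u t, w t))) :
    ∃ r, |r - b| ≤ 1 ∧
      4 ≤ #(((Ioo i₀ m).filter fun t => w t / 7 = r).image fun t => (u t, w t)) := by
  set S := Ioo i₀ m
  by_cases hcross : (∃ t₁ ∈ S, w t₁ / 7 = b - 1) ∧ ∃ t₂ ∈ S, w t₂ / 7 = b + 1
  · obtain ⟨⟨t₁, ht₁, hw₁⟩, t₂, ht₂, hw₂⟩ := hcross
    rw [mem_Ioo] at ht₁ ht₂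
    have hsub : Ico (7 * b) (7 * b + 7) ⊆ (S.filter fun t => w t / 7 = b).image w := by
      intro v hv
      rw [mem_Ico] at hv
      obtain ⟨t, ht, rfl⟩ :=
        hw.exists_eq (v := v) ht₁.2.le ht₂.2.le (by rw [Set.mem_uIcc]; omega)
      rw [Set.mem_uIcc] at ht
      exact mem_image_of_mem w (mem_filter.mpr ⟨mem_Ioo.mpr (by omega), by omega⟩)
    refine ⟨b, by simp, ?_⟩
    calc 4 ≤ 7 := by norm_num
      _ ≤ #((S.filter fun t => w t / 7 = b).image w) := le_card_of_Ico_subset (n := 7) hsub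
      _ ≤ _ := card_image_comp_le _ (fun t => (u t, w t)) Prod.snd
  · obtain ⟨r₀, hr₀, hr₁, hrows⟩ : ∃ r₀, |r₀ - b| ≤ 1 ∧ |r₀ + 1 - b| ≤ 1 ∧
        ∀ t ∈ S, w t / 7 = r₀ ∨ w t / 7 = r₀ + 1 := by
      have hrow : ∀ t ∈ S, -1 ≤ w t / 7 - b ∧ w t / 7 - b ≤ 1 := fun t ht =>
        abs_le.mp (hin t ht)
      by_cases hlow : ∃ t₁ ∈ S, w t₁ / 7 = b - 1
      · have hhigh : ∀ t ∈ S, w t / 7 ≠ b + 1 := fun t ht h => hcross ⟨hlow, t, ht, h⟩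
        refine ⟨b - 1, by simp, by simp, fun t ht => ?_⟩
        have := hrow t ht; have := hhigh t ht; omega
      · push Not at hlow
        refine ⟨b, by simp, by simp, fun t ht => ?_⟩
        have := hrow t ht; have := hlow t ht; omega
    have hmaps : ∀ q ∈ S.image (fun t => (u t, w t)), q.2 / 7 ∈ ({r₀, r₀ + 1} : Finset ℤ) := by
      intro q hq
      obtain ⟨t, ht, rfl⟩ := mem_image.mp hq
      simpa using hrows t ht
    have hfew : #({r₀, r₀ + 1} : Finset ℤ) * 3 < #(S.image fun t => (u t, w t)) := by
      have := card_le_two (a := r₀) (b := r₀ + 1); omega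
    obtain ⟨r, hr, hcard⟩ := exists_lt_card_fiber_of_mul_lt_card_of_maps_to hmaps hfew
    rw [filter_image] at hcard
    refine ⟨r, ?_, hcard⟩
    rcases mem_insert.mp hr with rfl | hr
    · exact hr₀
    · rwa [mem_singleton.mp hr]

theorem exists_full_cell_of_exit (hu : UnitSteps u m) (hw : UnitSteps w m) {a b : ℤ}
    (h0 : u 0 / 7 = a) (hin : ∀ t < m, |u t / 7 - a| ≤ 1 ∧ |w t / 7 - b| ≤ 1)
    (hout : 1 < |u m / 7 - a|) :
    ∃ a' b', |a' - a| = 1 ∧ |b' - b| ≤ 1 ∧ ∃ T : Finset ℕ,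
      (∀ t ∈ T, t < m ∧ u t / 7 = a' ∧ w t / 7 = b') ∧ 4 ≤ #(T.image fun t => (u t, w t)) := by
  obtain ⟨a', ha', i₀, -, hcol, hsub⟩ :=
    hu.exists_crossing_of_exit h0 (fun t ht => (hin t ht).1) hout
  have hseven : 7 ≤ #((Ioo i₀ m).image fun t => (u t, w t)) :=
    (le_card_of_Ico_subset (n := 7) hsub).trans
      (card_image_comp_le _ (fun t => (u t, w t)) Prod.fst)
  obtain ⟨r, hr, hcard⟩ :=
    hw.exists_row_four_le_card (fun t ht => (hin t (mem_Ioo.mp ht).2).2) hseven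
  refine ⟨a', r, ha', hr, _, fun t ht => ?_, hcard⟩
  obtain ⟨ht, htr⟩ := mem_filter.mp ht
  exact ⟨(mem_Ioo.mp ht).2, hcol t ht, htr⟩

end UnitSteps

theorem exists_full_cell_of_unitSteps {X Y : ℕ → ℤ} {k : ℕ} (hX : UnitSteps X k)
    (hY : UnitSteps Y k) {a b : ℤ} (hX0 : X 0 / 7 = a) (hY0 : Y 0 / 7 = b)
    (hend : ¬(|X k / 7 - a| ≤ 1 ∧ |Y k / 7 - b| ≤ 1)) :
    ∃ a' b', |a' - a| ≤ 1 ∧ |b' - b| ≤ 1 ∧ ¬(a' = a ∧ b' = b) ∧ ∃ T : Finset ℕ,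
      (∀ t ∈ T, t ≤ k ∧ X t / 7 = a' ∧ Y t / 7 = b') ∧
        4 ≤ #(T.image fun t => (X t, Y t)) := by
  have hex : ∃ m, ¬(|X m / 7 - a| ≤ 1 ∧ |Y m / 7 - b| ≤ 1) := ⟨k, hend⟩
  have hmk : Nat.find hex ≤ k := Nat.find_min' hex hend
  have hin : ∀ t < Nat.find hex, |X t / 7 - a| ≤ 1 ∧ |Y t / 7 - b| ≤ 1 :=
    fun t ht => not_not.mp (Nat.find_min hex ht)
  rcases not_and_or.mp (Nat.find_spec hex) with hout | hout
  · obtain ⟨a', b', ha', hb', T, hT, hcard⟩ :=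
      (hX.mono hmk).exists_full_cell_of_exit (hY.mono hmk) hX0 hin (not_le.mp hout)
    refine ⟨a', b', ha'.le, hb', ?_, T, fun t ht => ?_, hcard⟩
    · rintro ⟨rfl, -⟩; simp at ha'
    · obtain ⟨ht, hXt, hYt⟩ := hT t ht; exact ⟨by omega, hXt, hYt⟩
  · obtain ⟨b', a', hb', ha', T, hT, hcard⟩ :=
      (hY.mono hmk).exists_full_cell_of_exit (hX.mono hmk) hY0 (fun t ht => (hin t ht).symm)
        (not_le.mp hout)
    refine ⟨a', b', ha', hb'.le, ?_, T, fun t ht => ?_, ?_⟩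
    · rintro ⟨-, rfl⟩; simp at hb'
    · obtain ⟨ht, hYt, hXt⟩ := hT t ht; exact ⟨by omega, hXt, hYt⟩
    · rwa [← card_image_of_injective _ Prod.swap_injective, image_image] at hcard

open Classical in
/-- Lay a grid of semi-open cells of side length 7 over a finite point set
`P` and call a cell full if it contains at least 4 points of `P`.  Any path in
`UDG(P)` (consecutive points at distance ≤ 1) that begins at a point in a cell `C`
and ends outside the 3×3 block centered at `C` must pass through a point lying in a
full cell of `C`'s block other than `C` itself. -/
theorem path_exits_block_through_full_cell
    (P : Finset (EuclideanSpace ℝ (Fin 2))) (a b : ℤ)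
    (k : ℕ) (p : ℕ → EuclideanSpace ℝ (Fin 2))
    (hmem : ∀ i ≤ k, p i ∈ P)
    (hstep : ∀ i < k, dist (p i) (p (i + 1)) ≤ 1)
    (hstart : p 0 ∈ cell a b)
    (hend : ∀ a' b' : ℤ, |a' - a| ≤ 1 → |b' - b| ≤ 1 → p k ∉ cell a' b') :
    ∃ i ≤ k, ∃ a' b' : ℤ, |a' - a| ≤ 1 ∧ |b' - b| ≤ 1 ∧ ¬(a' = a ∧ b' = b) ∧
      p i ∈ cell a' b' ∧ 4 ≤ (P.filter (fun x => x ∈ cell a' b')).card := by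
  obtain ⟨a', b', ha, hb, hne, T, hT, hcard⟩ :=
    exists_full_cell_of_unitSteps (unitSteps_floor_apply hstep 0) (unitSteps_floor_apply hstep 1)
      (mem_cell_iff.mp hstart).1 (mem_cell_iff.mp hstart).2
      fun h => hend _ _ h.1 h.2 (mem_cell_iff.mpr ⟨rfl, rfl⟩)
  have hcell : ∀ t ∈ T, p t ∈ cell a' b' := fun t ht => mem_cell_iff.mpr (hT t ht).2
  obtain ⟨i, hi⟩ : T.Nonempty :=
    card_pos.mp ((Nat.zero_lt_succ 3).trans_le (hcard.trans card_image_le))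
  refine ⟨i, (hT i hi).1, a', b', ha, hb, hne, hcell i hi, ?_⟩
  calc 4 ≤ #(T.image fun t => (⌊p t 0⌋, ⌊p t 1⌋)) := hcard
    _ ≤ #(T.image p) := card_image_comp_le T p fun x => (⌊x 0⌋, ⌊x 1⌋)
    _ ≤ _ := card_le_card fun x hx => by
      obtain ⟨t, ht, rfl⟩ := mem_image.mp hx
      exact mem_filter.mpr ⟨hmem t (hT t ht).1, hcell t ht⟩
end

section
/- If a path of k+1 points with unit steps has at least 7 interior points distributed among three horizontally adjacent 7×7 cells C₁, C₂, C₃ (left to right), and at least one interior point lies in C₁ and at least one lies in C₃, then the middle cell C₂ contains at least 7 of the interior points. -/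
open Real

lemma coord0_le_dist (x y : EuclideanSpace ℝ (Fin 2)) : |x 0 - y 0| ≤ dist x y := by
  rw [EuclideanSpace.dist_eq]
  have h : |x 0 - y 0| = Real.sqrt (dist (x 0) (y 0) ^ 2) := by
    rw [Real.sqrt_sq_eq_abs, Real.dist_eq, abs_abs]
  rw [h]
  apply Real.sqrt_le_sqrt
  exact Finset.single_le_sum (f := fun i => dist (x i) (y i) ^ 2)
    (fun i _ => sq_nonneg _) (Finset.mem_univ (0 : Fin 2))

lemma passage_up (f : ℕ → ℝ) (k : ℕ) (hstep : ∀ m < k, |f (m + 1) - f m| ≤ 1)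
    (i j : ℕ) (hij : i < j) (hjk : j ≤ k) (c : ℝ) (hi : f i < c) (hj : c ≤ f j) :
    ∃ m, i < m ∧ m ≤ j ∧ c ≤ f m ∧ f m < c + 1 := by
  classical
  have hex : ∃ n, i < n ∧ n ≤ j ∧ c ≤ f n := ⟨j, hij, le_refl j, hj⟩
  set m := Nat.find hex with hm
  obtain ⟨h1, h2, h3⟩ := Nat.find_spec hex
  refine ⟨m, h1, h2, h3, ?_⟩
  have hmpos : 0 < m := lt_of_le_of_lt (Nat.zero_le i) h1
  have hprev : f (m - 1) < c := by
    rcases eq_or_lt_of_le (Nat.le_sub_one_of_lt h1) with he | hlt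
    · rw [← he]; exact hi
    · have hmin := Nat.find_min hex (Nat.sub_lt hmpos one_pos)
      by_contra hc
      push_neg at hc
      exact hmin ⟨hlt, le_trans (Nat.sub_le m 1) h2, hc⟩
  have hstepm := hstep (m - 1) (by omega)
  have hmm : m - 1 + 1 = m := by omega
  rw [hmm] at hstepm
  have := abs_le.mp hstepm
  linarith [this.1, this.2]

lemma passage_down (f : ℕ → ℝ) (k : ℕ) (hstep : ∀ m < k, |f (m + 1) - f m| ≤ 1)
    (i j : ℕ) (hji : j < i) (hik : i ≤ k) (c : ℝ) (hj : c ≤ f j) (hi : f i < c) :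
    ∃ m, j < m ∧ m ≤ i ∧ c - 1 ≤ f m ∧ f m < c := by
  classical
  have hex : ∃ n, j < n ∧ n ≤ i ∧ f n < c := ⟨i, hji, le_refl i, hi⟩
  set m := Nat.find hex with hm
  obtain ⟨h1, h2, h3⟩ := Nat.find_spec hex
  refine ⟨m, h1, h2, ?_, h3⟩
  have hmpos : 0 < m := lt_of_le_of_lt (Nat.zero_le j) h1
  have hprev : c ≤ f (m - 1) := by
    rcases eq_or_lt_of_le (Nat.le_sub_one_of_lt h1) with he | hlt
    · rw [← he]; exact hj
    · have hmin := Nat.find_min hex (Nat.sub_lt hmpos one_pos)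
      by_contra hc
      push_neg at hc
      exact hmin ⟨hlt, le_trans (Nat.sub_le m 1) h2, hc⟩
  have hstepm := hstep (m - 1) (by omega)
  have hmm : m - 1 + 1 = m := by omega
  rw [hmm] at hstepm
  have := abs_le.mp hstepm
  linarith [this.1, this.2]

open Classical in
/-- If a unit-step path of `k+1` points has at least 7 interior points,
all of whose interior points lie in three horizontally adjacent 7×7 cells
`C₁, C₂, C₃` (left to right), and at least one interior point lies in `C₁` and at
least one in `C₃`, then the middle cell `C₂` contains at least 7 of the interior
points. -/
theorem middle_cell_contains_seven
    (k : ℕ) (p : ℕ → EuclideanSpace ℝ (Fin 2)) (a b : ℤ)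
    (hstep : ∀ i < k, dist (p i) (p (i + 1)) ≤ 1)
    (hcount : 7 ≤ (Finset.Ioo 0 k).card)
    (hin : ∀ i ∈ Finset.Ioo 0 k, p i ∈ cell a b ∪ cell (a + 1) b ∪ cell (a + 2) b)
    (h1 : ∃ i ∈ Finset.Ioo 0 k, p i ∈ cell a b)
    (h3 : ∃ i ∈ Finset.Ioo 0 k, p i ∈ cell (a + 2) b) :
    7 ≤ ((Finset.Ioo 0 k).filter (fun i => p i ∈ cell (a + 1) b)).card := by
  classical
  obtain ⟨i0, hi0m, hi0c⟩ := h1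
  obtain ⟨j0, hj0m, hj0c⟩ := h3
  rw [Finset.mem_Ioo] at hi0m hj0m
  set L : ℝ := 7 * (a : ℝ) + 7 with hLdef
  set f : ℕ → ℝ := fun n => p n 0 with hfdef
  have hfstep : ∀ m < k, |f (m + 1) - f m| ≤ 1 := by
    intro m hm
    calc |f (m + 1) - f m| ≤ dist (p (m + 1)) (p m) := coord0_le_dist _ _
      _ = dist (p m) (p (m + 1)) := dist_comm _ _
      _ ≤ 1 := hstep m hm
  have hx1 : f i0 < L := hi0c.2.1
  have hx3 : L + 7 ≤ f j0 := by
    have h := hj0c.1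
    have hc : ((a + 2 : ℤ) : ℝ) = (a : ℝ) + 2 := by push_cast; ring
    rw [hc] at h
    rw [hLdef]; linarith
  have key : ∀ t : Fin 7, ∃ m, m ∈ Finset.Ioo 0 k ∧
      L + (t : ℕ) ≤ f m ∧ f m < L + (t : ℕ) + 1 := by
    intro t
    have ht6 : ((t : ℕ) : ℝ) ≤ 6 := by
      have := t.is_lt
      have h6 : (t : ℕ) ≤ 6 := by omega
      exact_mod_cast h6
    have ht0 : (0 : ℝ) ≤ ((t : ℕ) : ℝ) := Nat.cast_nonneg _
    rcases lt_trichotomy i0 j0 with h | h | h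
    · obtain ⟨m, hm1, hm2, hm3, hm4⟩ := passage_up f k hfstep i0 j0 h (le_of_lt hj0m.2)
        (L + (t : ℕ)) (by linarith) (by linarith)
      exact ⟨m, Finset.mem_Ioo.mpr ⟨lt_of_le_of_lt (Nat.zero_le i0) hm1,
        lt_of_le_of_lt hm2 hj0m.2⟩, hm3, hm4⟩
    · exfalso
      rw [h] at hx1
      linarith
    · obtain ⟨m, hm1, hm2, hm3, hm4⟩ := passage_down f k hfstep i0 j0 h (le_of_lt hi0m.2)
        (L + (t : ℕ) + 1) (by linarith) (by linarith)
      exact ⟨m, Finset.mem_Ioo.mpr ⟨lt_of_le_of_lt (Nat.zero_le j0) hm1,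
        lt_of_le_of_lt hm2 hi0m.2⟩, by linarith, hm4⟩
  choose g hg1 hg2 hg3 using key
  have hinj : Function.Injective g := by
    intro s t hst
    have hs2 := hg2 s
    have hs3 := hg3 s
    have ht2 := hg2 t
    have ht3 := hg3 t
    rw [hst] at hs2 hs3
    have h1 : ((s : ℕ) : ℝ) < (t : ℕ) + 1 := by linarith
    have h2 : ((t : ℕ) : ℝ) < (s : ℕ) + 1 := by linarith
    have h1' : (s : ℕ) < (t : ℕ) + 1 := by exact_mod_cast h1
    have h2' : (t : ℕ) < (s : ℕ) + 1 := by exact_mod_cast h2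
    exact Fin.ext (by omega)
  have hsub : Finset.image g Finset.univ ⊆
      (Finset.Ioo 0 k).filter (fun i => p i ∈ cell (a + 1) b) := by
    intro m hm
    rw [Finset.mem_image] at hm
    obtain ⟨t, _, rfl⟩ := hm
    refine Finset.mem_filter.mpr ⟨hg1 t, ?_⟩
    have ht6 : ((t : ℕ) : ℝ) ≤ 6 := by
      have h6 : (t : ℕ) ≤ 6 := by omega
      exact_mod_cast h6
    have ht0 : (0 : ℝ) ≤ ((t : ℕ) : ℝ) := Nat.cast_nonneg _
    have hlo := hg2 t
    have hhi := hg3 t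
    rcases hin (g t) (hg1 t) with (hc | hc) | hc
    · exfalso
      have := hc.2.1
      rw [hLdef] at hlo
      linarith
    · exact hc
    · exfalso
      have h := hc.1
      have hcst : ((a + 2 : ℤ) : ℝ) = (a : ℝ) + 2 := by push_cast; ring
      rw [hcst] at h
      rw [hLdef] at hhi
      linarith
  calc (7 : ℕ) = (Finset.image g Finset.univ).card := by
        rw [Finset.card_image_of_injective _ hinj, Finset.card_univ, Fintype.card_fin]
    _ ≤ _ := Finset.card_le_card hsub
end

section
/- Let P_C be a finite set of at least 4 points in the plane, and let a₁a₂ be a longest edge of the convex hull of P_C, with the hull lying above the horizontal segment a₁a₂. Then the vertical half-strip with base a₁a₂ extending upward contains at least one point of P_C \ {a₁, a₂}. -/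
/-!
Suppose the half-strip contains no point of `P` besides `a₁, a₂`. Then every point of `P` lies
weakly left of `a₁` or weakly right of `a₂`, and the upper bridge between these two groups lies
on a supporting line of `P`. The hull edge on that line spans the strip, so it is at least as
long as `a₁a₂`; since `a₁a₂` is longest, the bridge must join `a₁` to `a₂`. Then the supporting
line is the base line and all of `P` lies on it, so a third point of `P` sits on the line through
the edge `a₁a₂` but outside the segment, which is impossible for an edge.
-/

open Complex

section Hyperplane

variable {𝕜 E : Type*} [Field 𝕜] [LinearOrder 𝕜] [IsStrictOrderedRing 𝕜] [AddCommGroup E]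
  [Module 𝕜 E] (f : E →ₗ[𝕜] 𝕜) {S K : Set E} {c : 𝕜}

lemma convex_setOf_lt_union (hK : Convex 𝕜 K) (hKc : ∀ x ∈ K, f x ≤ c) :
    Convex 𝕜 ({x | f x < c} ∪ K) := by
  refine convex_iff_openSegment_subset.2 fun x hx y hy z hz => ?_
  by_cases hxy : x ∈ K ∧ y ∈ K
  · exact Or.inr (hK.openSegment_subset hxy.1 hxy.2 hz)
  have hfx : f x ≤ c := hx.elim le_of_lt (hKc x)
  have hfy : f y ≤ c := hy.elim le_of_lt (hKc y)
  have hlt : f x < c ∨ f y < c := by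
    rcases hx with hx | hx <;> rcases hy with hy | hy <;> tauto
  obtain ⟨a, b, ha, hb, hab, rfl⟩ := hz
  left
  show f (a • x + b • y) < c
  rw [map_add, map_smul, map_smul, smul_eq_mul, smul_eq_mul]
  calc a * f x + b * f y < a * c + b * c := by
        rcases hlt with h | h
        · exact add_lt_add_of_lt_of_le (mul_lt_mul_of_pos_left h ha)
            (mul_le_mul_of_nonneg_left hfy hb.le)
        · exact add_lt_add_of_le_of_lt (mul_le_mul_of_nonneg_left hfx ha.le)
            (mul_lt_mul_of_pos_left h hb)
    _ = c := by rw [← add_mul, hab, one_mul]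

variable {f}

lemma convexHull_inter_setOf_eq_subset (hS : ∀ x ∈ S, f x ≤ c) :
    convexHull 𝕜 S ∩ {x | f x = c} ⊆ convexHull 𝕜 (S ∩ {x | f x = c}) := by
  have hKc : ∀ x ∈ convexHull 𝕜 (S ∩ {x | f x = c}), f x ≤ c := fun x hx =>
    convexHull_min (fun y hy => le_of_eq hy.2) (convex_halfSpace_le f.isLinear c) hx
  have hsub : convexHull 𝕜 S ⊆ {x | f x < c} ∪ convexHull 𝕜 (S ∩ {x | f x = c}) :=
    convexHull_min (fun x hx => (hS x hx).lt_or_eq.imp id fun h => subset_convexHull 𝕜 _ ⟨hx, h⟩)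
      (convex_setOf_lt_union f (convex_convexHull 𝕜 _) hKc)
  rintro x ⟨hx, hfx⟩
  exact (hsub hx).resolve_left (lt_irrefl c <| hfx ▸ ·)

lemma isExtreme_convexHull_inter_setOf_eq (hS : ∀ x ∈ S, f x ≤ c) :
    IsExtreme 𝕜 (convexHull 𝕜 S) (convexHull 𝕜 S ∩ {x | f x = c}) := by
  have hle : ∀ x ∈ convexHull 𝕜 S, f x ≤ c := fun x hx =>
    convexHull_min hS (convex_halfSpace_le f.isLinear c) hx
  refine ⟨Set.inter_subset_left, fun x₁ hx₁ x₂ hx₂ x ⟨_, hfx⟩ hx => ?_⟩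
  have h := (f.convexOn convex_univ).le_left_of_right_le trivial trivial hx (hfx ▸ hle x₂ hx₂)
  exact ⟨hx₁, le_antisymm (hle x₁ hx₁) (hfx ▸ h)⟩

end Hyperplane

section Plane

noncomputable def slopeForm (s : ℝ) : ℂ →ₗ[ℝ] ℝ := imLm - s • reLm

@[simp] lemma slopeForm_apply (s : ℝ) (z : ℂ) : slopeForm s z = z.im - s * z.re := by
  simp [slopeForm]

lemma exists_slopeForm_eq {u v : ℂ} (h : u.re ≠ v.re) :
    ∃ s c, slopeForm s u = c ∧ slopeForm s v = c := by
  refine ⟨(v.im - u.im) / (v.re - u.re), _, rfl, ?_⟩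
  simp only [slopeForm_apply]
  field_simp [sub_ne_zero.2 h.symm]
  ring

-- `t ↦ t + (s * t + c) * I`, a parametrisation of the line `slopeForm s = c`.
noncomputable def lineGraph (s c : ℝ) : ℝ →ᵃ[ℝ] ℂ := AffineMap.lineMap (c * I) (1 + (s + c) * I)

variable {s c : ℝ} {u v z : ℂ}

lemma lineGraph_re (hz : slopeForm s z = c) : lineGraph s c z.re = z := by
  simp only [slopeForm_apply] at hz
  apply Complex.ext <;> simp [lineGraph, AffineMap.lineMap_apply_module']
  linarith

lemma re_mem_segment (hz : z ∈ segment ℝ u v) : z.re ∈ segment ℝ u.re v.re := by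
  have h := Set.mem_image_of_mem reLm.toAffineMap hz
  rwa [image_segment] at h

lemma mem_segment_of_re_mem (hu : slopeForm s u = c) (hv : slopeForm s v = c)
    (hz : slopeForm s z = c) (h : z.re ∈ segment ℝ u.re v.re) : z ∈ segment ℝ u v := by
  rw [← lineGraph_re hu, ← lineGraph_re hv, ← lineGraph_re hz, ← image_segment]
  exact Set.mem_image_of_mem _ h

lemma mem_openSegment_of_re_mem (hu : slopeForm s u = c) (hv : slopeForm s v = c)
    (hz : slopeForm s z = c) (h : z.re ∈ openSegment ℝ u.re v.re) : z ∈ openSegment ℝ u v := by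
  rw [← lineGraph_re hu, ← lineGraph_re hv, ← lineGraph_re hz, ← image_openSegment]
  exact Set.mem_image_of_mem _ h

lemma mem_segment_of_isExtreme {A : Set ℂ} {p : ℂ} (hA : IsExtreme ℝ A (segment ℝ u v))
    (hu : slopeForm s u = c) (hv : slopeForm s v = c) (huv : u.re < v.re) (hp : p ∈ A)
    (hpc : slopeForm s p = c) : p ∈ segment ℝ u v := by
  have huA := hA.subset (left_mem_segment ℝ u v)
  have hvA := hA.subset (right_mem_segment ℝ u v)
  rcases lt_or_ge p.re u.re with hpu | hup
  · refine hA.left_mem_of_mem_openSegment hp hvA (left_mem_segment ℝ u v) ?_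
    refine mem_openSegment_of_re_mem hpc hv hu ?_
    rw [openSegment_eq_Ioo (hpu.trans huv)]
    exact ⟨hpu, huv⟩
  rcases le_or_gt p.re v.re with hpv | hvp
  · exact mem_segment_of_re_mem hu hv hpc (by rw [segment_eq_Icc huv.le]; exact ⟨hup, hpv⟩)
  · refine hA.right_mem_of_mem_openSegment huA hp (right_mem_segment ℝ u v) ?_
    refine mem_openSegment_of_re_mem hu hpc hv ?_
    rw [openSegment_eq_Ioo (huv.trans hvp)]
    exact ⟨huv, hvp⟩

lemma exists_isExtreme_segment_of_forall_le {P : Finset ℂ} (hP : ∀ p ∈ P, slopeForm s p ≤ c)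
    (hu : u ∈ P) (huc : slopeForm s u = c) (hv : v ∈ P) (hvc : slopeForm s v = c) :
    ∃ u' ∈ P, ∃ v' ∈ P, u'.re ≤ u.re ∧ v.re ≤ v'.re ∧
      IsExtreme ℝ (convexHull ℝ (P : Set ℂ)) (segment ℝ u' v') := by
  classical
  set T := P.filter (slopeForm s · = c)
  obtain ⟨u', hu'T, hmin⟩ := T.exists_min_image re ⟨u, Finset.mem_filter.2 ⟨hu, huc⟩⟩
  obtain ⟨v', hv'T, hmax⟩ := T.exists_max_image re ⟨v, Finset.mem_filter.2 ⟨hv, hvc⟩⟩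
  have hT : ∀ {p}, p ∈ T ↔ p ∈ P ∧ slopeForm s p = c := Finset.mem_filter
  have hP' : ∀ x ∈ (P : Set ℂ), slopeForm s x ≤ c := hP
  have hface : segment ℝ u' v' = convexHull ℝ (P : Set ℂ) ∩ {z | slopeForm s z = c} := by
    refine subset_antisymm (Set.subset_inter
      (segment_subset_convexHull (hT.1 hu'T).1 (hT.1 hv'T).1)
      ((convex_hyperplane (slopeForm s).isLinear c).segment_subset (hT.1 hu'T).2 (hT.1 hv'T).2))
      ((convexHull_inter_setOf_eq_subset hP').trans (convexHull_min ?_ (convex_segment u' v')))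
    rintro z ⟨hzP, hzc⟩
    have hzT : z ∈ T := hT.2 ⟨hzP, hzc⟩
    refine mem_segment_of_re_mem (hT.1 hu'T).2 (hT.1 hv'T).2 hzc ?_
    rw [segment_eq_Icc (hmin v' hv'T)]
    exact ⟨hmin z hzT, hmax z hzT⟩
  refine ⟨u', (hT.1 hu'T).1, v', (hT.1 hv'T).1, hmin u (hT.2 ⟨hu, huc⟩),
    hmax v (hT.2 ⟨hv, hvc⟩), ?_⟩
  rw [hface]
  exact isExtreme_convexHull_inter_setOf_eq hP'

-- The height at abscissa `x₀` of the line through `p` and `q`.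
noncomputable def chordHeight (x₀ : ℝ) (p q : ℂ) : ℝ :=
  ((q.re - x₀) * p.im + (x₀ - p.re) * q.im) / (q.re - p.re)

lemma chordHeight_sub {p q : ℂ} (x₀ : ℝ) (hpq : p.re ≠ q.re) :
    chordHeight x₀ p q - (s * x₀ + c) =
      ((q.re - x₀) * (slopeForm s p - c) + (x₀ - p.re) * (slopeForm s q - c)) / (q.re - p.re) := by
  rw [eq_div_iff (sub_ne_zero.2 hpq.symm), chordHeight, sub_mul,
    div_mul_cancel₀ _ (sub_ne_zero.2 hpq.symm), slopeForm_apply, slopeForm_apply]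
  ring

lemma exists_supportingLine_across {P : Finset ℂ} {α β : ℝ} (hαβ : α < β)
    (hgap : ∀ p ∈ P, p.re ≤ α ∨ β ≤ p.re) {a b : ℂ} (ha : a ∈ P) (haα : a.re ≤ α) (hb : b ∈ P)
    (hbβ : β ≤ b.re) :
    ∃ s c, (∀ p ∈ P, slopeForm s p ≤ c) ∧
      ∃ u ∈ P, ∃ v ∈ P, u.re ≤ α ∧ β ≤ v.re ∧ slopeForm s u = c ∧ slopeForm s v = c := by
  classical
  obtain ⟨x₀, hαx₀, hx₀β⟩ := exists_between hαβ
  -- The highest chord above `x₀` among pairs straddling the gap is the upper bridge.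
  obtain ⟨⟨u, v⟩, huv, hmax⟩ := ((P.filter (·.re ≤ α)) ×ˢ (P.filter (β ≤ ·.re))).exists_max_image
    (fun pq => chordHeight x₀ pq.1 pq.2) ⟨(a, b), by simp [*]⟩
  simp only [Finset.mem_product, Finset.mem_filter, and_imp, Prod.forall] at huv hmax
  obtain ⟨⟨hu, huα⟩, hv, hvβ⟩ := huv
  obtain ⟨s, c, huc, hvc⟩ := exists_slopeForm_eq (by linarith : u.re ≠ v.re)
  refine ⟨s, c, fun p hp => ?_, u, hu, v, hv, huα, hvβ, huc, hvc⟩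
  by_contra! hpc
  have huv : chordHeight x₀ u v - (s * x₀ + c) = 0 := by
    rw [chordHeight_sub x₀ (by linarith), huc, hvc]
    simp
  rcases hgap p hp with hpα | hpβ
  · have hpv : chordHeight x₀ p v - (s * x₀ + c) > 0 := by
      rw [chordHeight_sub x₀ (by linarith), hvc, sub_self, mul_zero, add_zero]
      exact div_pos (mul_pos (by linarith) (by linarith)) (by linarith)
    linarith [hmax p v hp hpα hv hvβ]
  · have hup : chordHeight x₀ u p - (s * x₀ + c) > 0 := by
      rw [chordHeight_sub x₀ (by linarith), huc, sub_self, mul_zero, zero_add]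
      exact div_pos (mul_pos (by linarith) (by linarith)) (by linarith)
    linarith [hmax u p hu huα hp hpβ]


lemma re_sub_le_dist (u v : ℂ) : v.re - u.re ≤ dist u v := by
  rw [dist_comm, Complex.dist_eq, ← sub_re]
  exact re_le_norm _

lemma dist_eq_re_sub_of_im_eq {u v : ℂ} (him : u.im = v.im) (hre : u.re ≤ v.re) :
    dist u v = v.re - u.re := by
  rw [dist_of_im_eq him, Real.dist_eq, abs_sub_comm, abs_of_nonneg (sub_nonneg.2 hre)]

end Plane

/-- Let `P` be a finite set of at least 4 points, and let `a₁a₂` be a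
longest edge of the convex hull of `P` (an edge being a segment between distinct points
that is an extreme subset of the hull), with `a₁a₂` horizontal, `a₁` left of `a₂`, and
the hull lying above it.  Then the vertical half-strip with base `a₁a₂` extending
upward contains a point of `P \ {a₁, a₂}`. -/
theorem halfstrip_above_longest_edge_nonempty
    (P : Finset ℂ) (h4 : 4 ≤ P.card) (a₁ a₂ : ℂ)
    (ha₁ : a₁ ∈ P) (ha₂ : a₂ ∈ P) (hhor : a₁.im = a₂.im) (hlt : a₁.re < a₂.re)
    (habove : ∀ p ∈ P, a₁.im ≤ p.im)
    (hedge : IsExtreme ℝ (convexHull ℝ (P : Set ℂ)) (segment ℝ a₁ a₂))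
    (hlongest : ∀ x y : ℂ, x ≠ y →
      IsExtreme ℝ (convexHull ℝ (P : Set ℂ)) (segment ℝ x y) → dist x y ≤ dist a₁ a₂) :
    ∃ p ∈ P, p ≠ a₁ ∧ p ≠ a₂ ∧ a₁.re ≤ p.re ∧ p.re ≤ a₂.re ∧ a₁.im ≤ p.im := by
  by_contra! hcon
  have hstrip : ∀ p ∈ P, a₁.re ≤ p.re → p.re ≤ a₂.re → p = a₁ ∨ p = a₂ := fun p hp h₁ h₂ => by
    by_contra! hne
    exact (hcon p hp hne.1 hne.2 h₁ h₂).not_ge (habove p hp)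
  have hgap : ∀ p ∈ P, p.re ≤ a₁.re ∨ a₂.re ≤ p.re := fun p hp => by
    by_contra! h
    rcases hstrip p hp h.1.le h.2.le with rfl | rfl <;> simp at h
  obtain ⟨s, c, hsupp, u, hu, v, hv, hua, hvb, huc, hvc⟩ :=
    exists_supportingLine_across hlt hgap ha₁ le_rfl ha₂ le_rfl
  obtain ⟨u', -, v', -, hu'u, hvv', hedge'⟩ :=
    exists_isExtreme_segment_of_forall_le hsupp hu huc hv hvc
  have hlen : v'.re - u'.re ≤ a₂.re - a₁.re := calc
    v'.re - u'.re ≤ dist u' v' := re_sub_le_dist u' v'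
    _ ≤ dist a₁ a₂ := hlongest u' v' (fun h => by subst h; linarith) hedge'
    _ = a₂.re - a₁.re := dist_eq_re_sub_of_im_eq hhor hlt.le
  have hu₁ : u = a₁ := (hstrip u hu (by linarith) (hua.trans hlt.le)).resolve_right
    fun h => by subst h; linarith
  have hv₂ : v = a₂ := (hstrip v hv (hlt.le.trans hvb) (by linarith)).resolve_left
    fun h => by subst h; linarith
  rw [hu₁, slopeForm_apply] at huc
  rw [hv₂, slopeForm_apply] at hvc
  have hs : s = 0 := (mul_eq_zero.1 (by linarith : s * (a₂.re - a₁.re) = 0)).resolve_right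
    (sub_ne_zero.2 hlt.ne')
  obtain ⟨p, hp, hp₁⟩ := (P.erase a₂).exists_mem_ne (by rw [Finset.card_erase_of_mem ha₂]; omega) a₁
  obtain ⟨hp₂, hp⟩ := Finset.mem_erase.1 hp
  have hpim : p.im = a₁.im := le_antisymm (by simpa [hs, ← huc] using hsupp p hp) (habove p hp)
  have hpre := re_mem_segment <| mem_segment_of_isExtreme (s := 0) hedge rfl (by simp [hhor]) hlt
    (subset_convexHull ℝ _ hp) (by simp [hpim])
  rw [segment_eq_Icc hlt.le] at hpre
  rcases hstrip p hp hpre.1 hpre.2 with rfl | rfl <;> contradiction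
end

section
/- Let P be a set of 8m points in the plane and Π a closed tour visiting all points of P. Partition P along Π into m consecutive sections of 8 points each, and assign each point p in section S_i the range r(p) = max distance from p to any point in S_{i−1} ∪ S_i ∪ S_{i+1}. Then for each section, the sum of r(p)^β over p ∈ S_i is at most 8 · 15^β times the maximum of |pq|^β over pairs p, q consecutive on Π within S_{i−1} ∪ S_i ∪ S_{i+1}; summing over all sections, the total cost Σ_{p∈P} r(p)^β is at most 24 · 15^β · Σ_{e∈Π} |e|^β. -/
/-!
A point of `S_i` and any point of `S_{i-1} ∪ S_i ∪ S_{i+1}` are joined along the tour by at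
most 15 edges of that window, so by the triangle inequality the range of the point is at most
15 times the longest such edge; raising to the power `β` and summing over the 8 points of `S_i`
gives the bound per section. For the total, the maximum over a window is at most the sum over
the window, and each tour edge lies in the windows of three sections, whence `3 · 8 = 24`.
-/

open Real

/-- Index range (shifted by one period `8*m` to stay in ℕ) of the three consecutive
sections `S_{i-1} ∪ S_i ∪ S_{i+1}` of a closed tour of `8*m` points. -/
def secRange (m i : ℕ) : Finset ℕ := Finset.Ico (8 * i + 8 * m - 8) (8 * i + 8 * m + 16)

/-- The range assigned to the point with index `j` of section `S_i`: the maximum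
distance from it to any point of `S_{i-1} ∪ S_i ∪ S_{i+1}`. -/
noncomputable def rng (m : ℕ) (pts : ℕ → ℂ) (i j : ℕ) : ℝ :=
  (secRange m i).sup' (by unfold secRange; exact Finset.nonempty_Ico.mpr (by omega))
    (fun q => dist (pts j) (pts q))

/-- The maximum of `|pq|^β` over pairs `p, q` consecutive on the tour within
`S_{i-1} ∪ S_i ∪ S_{i+1}`. -/
noncomputable def maxConsec (m : ℕ) (β : ℝ) (pts : ℕ → ℂ) (i : ℕ) : ℝ :=
  (Finset.Ico (8 * i + 8 * m - 8) (8 * i + 8 * m + 15)).sup'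
    (Finset.nonempty_Ico.mpr (by omega)) (fun q => dist (pts q) (pts (q + 1)) ^ β)

open Finset

theorem dist_le_mul_of_forall_dist_succ_le {α : Type*} [PseudoMetricSpace α] {f : ℕ → α}
    {x y n : ℕ} {D : ℝ} (hD : 0 ≤ D) (hx : x ≤ y + n) (hy : y ≤ x + n)
    (h : ∀ q ∈ Ico (min x y) (max x y), dist (f q) (f (q + 1)) ≤ D) :
    dist (f x) (f y) ≤ n * D := by
  wlog hxy : x ≤ y generalizing x y
  · rw [dist_comm]
    exact this hy hx (by rwa [min_comm, max_comm]) (by omega)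
  rw [min_eq_left hxy, max_eq_right hxy] at h
  calc dist (f x) (f y) ≤ ∑ q ∈ Ico x y, dist (f q) (f (q + 1)) := dist_le_Ico_sum_dist f hxy
    _ ≤ (Ico x y).card • D := sum_le_card_nsmul _ _ _ h
    _ ≤ n * D := by
      rw [Nat.card_Ico, nsmul_eq_mul]
      gcongr
      exact_mod_cast (by omega : y - x ≤ n)

theorem Function.Periodic.sum_Ico_add_period {M : Type*} [AddCommMonoid M] {f : ℕ → M} {P : ℕ}
    (hf : Function.Periodic f P) (a : ℕ) :
    ∑ q ∈ Ico a (a + P), f q = ∑ q ∈ range P, f q := by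
  rcases P.eq_zero_or_pos with rfl | hP
  · simp
  induction a with
  | zero => rw [zero_add, range_eq_Ico]
  | succ a ih =>
    rw [← ih, sum_eq_sum_Ico_succ_bot (by omega : a < a + P), add_right_comm,
      sum_Ico_succ_top (by omega : a + 1 ≤ a + P), hf a, add_comm]

theorem Finset.sum_range_sum_Ico_mul_add {M : Type*} [AddCommMonoid M] (f : ℕ → M)
    (c k n : ℕ) :
    ∑ i ∈ range n, ∑ q ∈ Ico (c + k * i) (c + k * i + k), f q
      = ∑ q ∈ Ico c (c + k * n), f q := by
  induction n with
  | zero => simp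
  | succ n ih =>
    rw [sum_range_succ, ih, show c + k * n + k = c + k * (n + 1) by ring,
      sum_Ico_consecutive _ (by omega) (by nlinarith)]

theorem Function.Periodic.sum_range_sum_Ico_window {M : Type*} [AddCommMonoid M] {f : ℕ → M}
    {k n : ℕ} (hf : Function.Periodic f (k * n)) (c w : ℕ) :
    ∑ i ∈ range n, ∑ q ∈ Ico (c + k * i) (c + k * i + w * k), f q
      = w • ∑ q ∈ range (k * n), f q := by
  induction w with
  | zero => simp
  | succ w ih =>
    have hblock : ∀ i, ∑ q ∈ Ico (c + k * i) (c + k * i + (w + 1) * k), f q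
        = ∑ q ∈ Ico (c + k * i) (c + k * i + w * k), f q
          + ∑ q ∈ Ico (c + w * k + k * i) (c + w * k + k * i + k), f q := fun i => by
      rw [show c + w * k + k * i = c + k * i + w * k by ring, add_assoc _ (w * k),
        ← add_one_mul, sum_Ico_consecutive _ (by omega) (by nlinarith)]
    simp_rw [hblock, sum_add_distrib, ih, Finset.sum_range_sum_Ico_mul_add,
      hf.sum_Ico_add_period, succ_nsmul]

section Tour

variable (m : ℕ) (pts : ℕ → ℂ)

/-- The longest tour edge within `S_{i-1} ∪ S_i ∪ S_{i+1}`, indexed as in `maxConsec`. -/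
noncomputable def maxEdge (i : ℕ) : ℝ :=
  (Ico (8 * i + 8 * m - 8) (8 * i + 8 * m + 15)).sup'
    (nonempty_Ico.mpr (by omega)) (fun q => dist (pts q) (pts (q + 1)))

variable {m pts}

theorem dist_le_maxEdge {i q : ℕ} (hq : q ∈ Ico (8 * i + 8 * m - 8) (8 * i + 8 * m + 15)) :
    dist (pts q) (pts (q + 1)) ≤ maxEdge m pts i :=
  le_sup' (fun q => dist (pts q) (pts (q + 1))) hq

theorem maxEdge_nonneg (i : ℕ) : 0 ≤ maxEdge m pts i :=
  dist_nonneg.trans (dist_le_maxEdge (q := 8 * i + 8 * m - 8) (mem_Ico.mpr ⟨le_rfl, by omega⟩))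

theorem maxEdge_rpow_le_maxConsec (β : ℝ) (i : ℕ) :
    maxEdge m pts i ^ β ≤ maxConsec m β pts i := by
  obtain ⟨q, hq, hmax⟩ := exists_mem_eq_sup'
    (s := Ico (8 * i + 8 * m - 8) (8 * i + 8 * m + 15)) (nonempty_Ico.mpr (by omega))
    (fun q => dist (pts q) (pts (q + 1)))
  rw [maxEdge, hmax]
  exact le_sup' (fun q => dist (pts q) (pts (q + 1)) ^ β) hq

theorem rng_le_maxEdge (hper : Function.Periodic pts (8 * m)) {i j : ℕ}
    (hj : j ∈ Ico (8 * i) (8 * i + 8)) : rng m pts i j ≤ 15 * maxEdge m pts i := by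
  rw [mem_Ico] at hj
  refine sup'_le _ _ fun q hq => ?_
  rw [secRange, mem_Ico] at hq
  rw [← hper j]
  exact_mod_cast dist_le_mul_of_forall_dist_succ_le (n := 15) (maxEdge_nonneg i)
    (by omega) (by omega) fun r hr => dist_le_maxEdge (by simp only [mem_Ico] at hr ⊢; omega)

theorem rng_rpow_le (hper : Function.Periodic pts (8 * m)) {β : ℝ} (hβ : 0 ≤ β) {i j : ℕ}
    (hj : j ∈ Ico (8 * i) (8 * i + 8)) :
    rng m pts i j ^ β ≤ 15 ^ β * maxConsec m β pts i := by
  have hrng : 0 ≤ rng m pts i j := by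
    unfold rng
    exact le_sup'_of_le _ (b := 8 * i + 8 * m) (by simp [secRange]) dist_nonneg
  calc rng m pts i j ^ β ≤ (15 * maxEdge m pts i) ^ β :=
        Real.rpow_le_rpow hrng (rng_le_maxEdge hper hj) hβ
    _ = 15 ^ β * maxEdge m pts i ^ β := Real.mul_rpow (by norm_num) (maxEdge_nonneg i)
    _ ≤ 15 ^ β * maxConsec m β pts i := by gcongr; exact maxEdge_rpow_le_maxConsec β i

theorem sum_rng_rpow_le (hper : Function.Periodic pts (8 * m)) {β : ℝ} (hβ : 0 ≤ β)
    (i : ℕ) :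
    ∑ j ∈ Ico (8 * i) (8 * i + 8), rng m pts i j ^ β
      ≤ 8 * 15 ^ β * maxConsec m β pts i := by
  calc ∑ j ∈ Ico (8 * i) (8 * i + 8), rng m pts i j ^ β
      ≤ (Ico (8 * i) (8 * i + 8)).card • (15 ^ β * maxConsec m β pts i) :=
        sum_le_card_nsmul _ _ _ fun j hj => rng_rpow_le hper hβ hj
    _ = 8 * 15 ^ β * maxConsec m β pts i := by
      rw [Nat.card_Ico, add_tsub_cancel_left, nsmul_eq_mul, mul_assoc, Nat.cast_ofNat]

theorem sum_maxConsec_le (hper : Function.Periodic pts (8 * m)) (β : ℝ) :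
    ∑ i ∈ range m, maxConsec m β pts i
      ≤ 3 * ∑ q ∈ range (8 * m), dist (pts q) (pts (q + 1)) ^ β := by
  set e : ℕ → ℝ := fun q => dist (pts q) (pts (q + 1)) ^ β
  have he : Function.Periodic e (8 * m) := fun q => by
    simp only [e, add_right_comm q, hper q, hper (q + 1)]
  calc ∑ i ∈ range m, maxConsec m β pts i
      ≤ ∑ i ∈ range m, ∑ q ∈ Ico (8 * (m - 1) + 8 * i) (8 * (m - 1) + 8 * i + 3 * 8),
          e q := by
        refine sum_le_sum fun i hi => sup'_le _ _ fun q hq => ?_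
        refine single_le_sum (f := e) (fun q _ => by positivity) ?_
        simp only [mem_range, mem_Ico] at hi hq ⊢
        omega
    _ = 3 * ∑ q ∈ range (8 * m), e q := by
      rw [he.sum_range_sum_Ico_window, nsmul_eq_mul, Nat.cast_ofNat]

end Tour

theorem section_power_assignment_cost_general
    (m : ℕ) (β : ℝ) (hβ : 1 ≤ β) (pts : ℕ → ℂ)
    (hper : ∀ i, pts (i + 8 * m) = pts i) :
    (∀ i < m, ∑ j ∈ Finset.Ico (8 * i) (8 * i + 8), rng m pts i j ^ β
        ≤ 8 * 15 ^ β * maxConsec m β pts i) ∧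
    (∑ i ∈ Finset.range m, ∑ j ∈ Finset.Ico (8 * i) (8 * i + 8), rng m pts i j ^ β
        ≤ 24 * 15 ^ β * ∑ q ∈ Finset.range (8 * m), dist (pts q) (pts (q + 1)) ^ β) := by
  have hβ₀ : 0 ≤ β := by linarith
  refine ⟨fun i _ => sum_rng_rpow_le hper hβ₀ i, ?_⟩
  calc ∑ i ∈ range m, ∑ j ∈ Ico (8 * i) (8 * i + 8), rng m pts i j ^ β
      ≤ ∑ i ∈ range m, 8 * 15 ^ β * maxConsec m β pts i :=
        sum_le_sum fun i _ => sum_rng_rpow_le hper hβ₀ i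
    _ ≤ 8 * 15 ^ β * (3 * ∑ q ∈ range (8 * m), dist (pts q) (pts (q + 1)) ^ β) := by
      rw [← mul_sum]
      gcongr
      exact sum_maxConsec_le hper β
    _ = 24 * 15 ^ β * ∑ q ∈ range (8 * m), dist (pts q) (pts (q + 1)) ^ β := by ring

/-- Partition a closed tour `pts` of `8*m` points (indices taken mod
`8*m`, expressed by periodicity) into `m` consecutive sections `S_i` of 8 points each,
and assign to each point `j` of `S_i` the range `rng m pts i j`, the maximum distance
from it to a point of `S_{i-1} ∪ S_i ∪ S_{i+1}`.  Then for each section the sum of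
`r(p)^β` is at most `8 · 15^β` times the maximum of `|pq|^β` over pairs consecutive on
the tour within the three sections, and the total cost `Σ_p r(p)^β` is at most
`24 · 15^β · Σ_{e ∈ tour} |e|^β`. -/
theorem section_power_assignment_cost
    (m : ℕ) (hm : 1 ≤ m) (β : ℝ) (hβ : 1 ≤ β) (pts : ℕ → ℂ)
    (hper : ∀ i, pts (i + 8 * m) = pts i) :
    (∀ i < m, ∑ j ∈ Finset.Ico (8 * i) (8 * i + 8), rng m pts i j ^ β
        ≤ 8 * 15 ^ β * maxConsec m β pts i) ∧
    (∑ i ∈ Finset.range m, ∑ j ∈ Finset.Ico (8 * i) (8 * i + 8), rng m pts i j ^ β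
        ≤ 24 * 15 ^ β * ∑ q ∈ Finset.range (8 * m), dist (pts q) (pts (q + 1)) ^ β) :=
  section_power_assignment_cost_general m β hβ pts hper
end
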